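/- arXiv:1609.08390 — 9 statements merged into one kernel-verified Lean document; each statement's English description precedes it below -/
import Mathlib

section
/- Let λ > 0 and let P_λ(x) = e^{−λ} λ^x / x! denote the Poisson probabilities, with the convention P_λ(−1) = 0. Then for every x ∈ ℕ one has |P_λ(x) − P_λ(x−1)| ≤ min(1, C/λ), where C = e^{1/√2}/√(2π); moreover C ≤ 1. -/
/-! Since `P_λ(x) − P_λ(x−1) = (λ − x) P_λ(x) / λ`, it suffices to bound `|λ − x| P_λ(x)`
uniformly in `x`; for `x = 0` it is `λ e^{−λ} ≤ 1/e`. For `x ≥ 1`, Stirling's lower bound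
on `x!` and `t ≤ e^{t−1}` at `t = √(λ/x)` give `P_λ(x) ≤ e^{−(√x − √λ)²} / √(2πx)`.
With `s = |√x − √λ|` one has `|λ − x| ≤ s (2 + s) √x`, hence
`|λ − x| P_λ(x) ≤ (2 + s) s e^{−s²} / √(2π) ≤ 3 / (2√(2π))`, and `3/2 ≤ 1 + 1/√2 ≤ e^{1/√2}`. -/

/-- Poisson probabilities: `P_λ(x) = e^{-λ} λ^x / x!`. -/
noncomputable def poissonPmf (lam : ℝ) (x : ℕ) : ℝ :=
  Real.exp (-lam) * lam ^ x / Nat.factorial x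

open Real
open scoped Nat

lemma poissonPmf_nonneg {lam : ℝ} (hlam : 0 ≤ lam) (x : ℕ) : 0 ≤ poissonPmf lam x := by
  unfold poissonPmf; positivity

lemma poissonPmf_le_one {lam : ℝ} (hlam : 0 ≤ lam) (x : ℕ) : poissonPmf lam x ≤ 1 :=
  calc poissonPmf lam x = exp (-lam) * (lam ^ x / x !) := mul_div_assoc _ _ _
    _ ≤ exp (-lam) * exp lam := by gcongr; exact pow_div_factorial_le_exp _ hlam x
    _ = 1 := by rw [← exp_add, neg_add_cancel, exp_zero]

lemma poissonPmf_sub_prev {lam : ℝ} (hlam : lam ≠ 0) (x : ℕ) :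
    poissonPmf lam x - (if x = 0 then 0 else poissonPmf lam (x - 1)) =
      (lam - x) * poissonPmf lam x / lam := by
  cases x with
  | zero => simp [hlam]
  | succ n =>
    simp only [poissonPmf, Nat.succ_ne_zero, if_false, Nat.add_sub_cancel, Nat.factorial_succ]
    push_cast
    field_simp
    ring

lemma poissonPmf_le_exp_neg_sq_sqrt_sub {lam : ℝ} (hlam : 0 ≤ lam) {x : ℕ} (hx : x ≠ 0) :
    poissonPmf lam x ≤ exp (-(√x - √lam) ^ 2) / (√(2 * π) * √x) := by
  have hx0 : (0 : ℝ) < x := by positivity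
  obtain ⟨t, ht⟩ : ∃ t, t = √lam / √x := ⟨_, rfl⟩
  have hxt : x * t = √x * √lam := by
    rw [ht, mul_div_assoc', div_eq_iff (sqrt_pos.2 hx0).ne', mul_right_comm, mul_self_sqrt hx0.le]
  have hbase : lam ≤ x / exp 1 * exp (2 * t - 1) := by
    have ht0 : 0 ≤ t := ht ▸ by positivity
    have ht_le : t ^ 2 ≤ exp (t - 1) ^ 2 := by
      gcongr
      linarith [add_one_le_exp (t - 1)]
    calc lam = x * t ^ 2 := by rw [ht, div_pow, sq_sqrt hlam, sq_sqrt hx0.le]; field_simp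
      _ ≤ x * exp (t - 1) ^ 2 := by gcongr
      _ = x / exp 1 * exp (2 * t - 1) := by
        rw [← exp_nat_mul, div_mul_eq_mul_div, mul_div_assoc, ← exp_sub]
        congr 2
        push_cast
        ring
  have hpow : lam ^ x ≤ (x / exp 1) ^ x * exp (lam - (√x - √lam) ^ 2) := by
    have hexp : lam - (√x - √lam) ^ 2 = x * (2 * t - 1) := by
      linear_combination (-1 : ℝ) * sq_sqrt hx0.le - sq_sqrt hlam - 2 * hxt
    rw [hexp, exp_nat_mul, ← mul_pow]
    exact pow_le_pow_left₀ hlam hbase x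
  calc poissonPmf lam x = exp (-lam) * lam ^ x / x ! := rfl
    _ ≤ exp (-lam) * ((x / exp 1) ^ x * exp (lam - (√x - √lam) ^ 2)) /
          (√(2 * π * x) * (x / exp 1) ^ x) := by
      gcongr
      exact Stirling.le_factorial_stirling x
    _ = exp (-(√x - √lam) ^ 2) / (√(2 * π) * √x) := by
      rw [sqrt_mul (by positivity)]
      field_simp
      rw [← exp_add]
      ring_nf

lemma two_add_mul_mul_exp_neg_sq_le (s : ℝ) : (2 + s) * s * exp (-s ^ 2) ≤ 3 / 2 := by
  have h := quadratic_le_exp_of_nonneg (sq_nonneg s)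
  rw [exp_neg, ← div_eq_mul_inv, div_le_iff₀ (exp_pos _)]
  nlinarith [sq_nonneg (s - 1), sq_nonneg (s ^ 2 - 1 / 3)]

lemma abs_sq_sub_sq_mul_exp_neg_sq_sub_div_le {a b : ℝ} (ha : 1 ≤ a) :
    |b ^ 2 - a ^ 2| * (exp (-(a - b) ^ 2) / a) ≤ 3 / 2 := by
  obtain ⟨s, hs⟩ : ∃ s, s = |a - b| := ⟨_, rfl⟩
  have hs0 : 0 ≤ s := hs ▸ abs_nonneg _
  have h_factor : |b ^ 2 - a ^ 2| ≤ s * (a * (2 + s)) := by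
    have h_sum : |b + a| ≤ s + 2 * a := by
      rw [hs, abs_sub_comm]
      exact abs_le.2 ⟨by linarith [neg_abs_le (b - a)], by linarith [le_abs_self (b - a)]⟩
    rw [sq_sub_sq, abs_mul, mul_comm, abs_sub_comm, ← hs]
    gcongr
    nlinarith
  calc |b ^ 2 - a ^ 2| * (exp (-(a - b) ^ 2) / a)
      ≤ s * (a * (2 + s)) * (exp (-s ^ 2) / a) := by
        rw [hs, sq_abs]
        gcongr
        rwa [← hs]
    _ = (2 + s) * s * exp (-s ^ 2) := by
        field_simp
    _ ≤ 3 / 2 := two_add_mul_mul_exp_neg_sq_le s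

lemma abs_sub_mul_poissonPmf_le {lam : ℝ} (hlam : 0 ≤ lam) (x : ℕ) :
    |lam - x| * poissonPmf lam x ≤ 3 / (2 * √(2 * π)) := by
  rcases eq_or_ne x 0 with rfl | hx
  · have hsqrt : √(2 * π) ≤ 3 := (sqrt_le_left (by norm_num)).2 (by nlinarith [pi_le_four])
    calc |lam - (0 : ℕ)| * poissonPmf lam 0 = lam * exp (-lam) := by
          simp [poissonPmf, abs_of_nonneg hlam]
      _ ≤ exp (-1) := mul_exp_neg_le_exp_neg_one lam
      _ ≤ 1 / 2 := exp_neg_one_lt_half.le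
      _ ≤ 3 / (2 * √(2 * π)) := by
        rw [div_le_div_iff₀ (by norm_num) (by positivity)]
        linarith
  · have hx1 : 1 ≤ √(x : ℝ) := one_le_sqrt.2 (by exact_mod_cast Nat.one_le_iff_ne_zero.2 hx)
    calc |lam - x| * poissonPmf lam x
        ≤ |lam - x| * (exp (-(√x - √lam) ^ 2) / (√(2 * π) * √x)) := by
          gcongr
          exact poissonPmf_le_exp_neg_sq_sqrt_sub hlam hx
      _ = |√lam ^ 2 - √x ^ 2| * (exp (-(√x - √lam) ^ 2) / √x) / √(2 * π) := by
          rw [sq_sqrt hlam, sq_sqrt (Nat.cast_nonneg x)]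
          ring
      _ ≤ 3 / 2 / √(2 * π) := by
          gcongr
          exact abs_sq_sub_sq_mul_exp_neg_sq_sub_div_le hx1
      _ = 3 / (2 * √(2 * π)) := div_div _ _ _

lemma exp_inv_sqrt_two_le_sqrt_two_pi : exp (1 / √2) ≤ √(2 * π) := by
  have h_exponent : 1 / √2 ≤ 3 / 4 := by
    rw [div_le_iff₀ (by positivity)]
    nlinarith [(le_sqrt (by norm_num) (by norm_num)).2 (by norm_num : ((4 : ℝ) / 3) ^ 2 ≤ 2)]
  have h_fourth : exp (3 / 4) ^ 4 ≤ √(2 * π) ^ 4 :=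
    calc exp (3 / 4) ^ 4 = exp 1 ^ 3 := by rw [← exp_nat_mul, ← exp_nat_mul]; norm_num
      _ ≤ 3 ^ 3 := by gcongr; exact exp_one_lt_three.le
      _ ≤ (2 * π) ^ 2 := by nlinarith [pi_gt_three]
      _ = √(2 * π) ^ 4 := by rw [show 4 = 2 * 2 from rfl, pow_mul, sq_sqrt (by positivity)]
  calc exp (1 / √2) ≤ exp (3 / 4) := exp_le_exp.2 h_exponent
    _ ≤ √(2 * π) := (pow_le_pow_iff_left₀ (by positivity) (by positivity) four_ne_zero).1 h_fourth

/-- For every `x ∈ ℕ`, `|P_λ(x) − P_λ(x−1)| ≤ min(1, C/λ)` with the convention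
`P_λ(−1) = 0`, where `C = e^{1/√2}/√(2π)`; moreover `C ≤ 1`. -/
theorem poisson_pointwise_difference_bound (lam : ℝ) (hlam : 0 < lam) :
    (∀ x : ℕ,
      |poissonPmf lam x - (if x = 0 then 0 else poissonPmf lam (x - 1))| ≤
        min 1 (Real.exp (1 / Real.sqrt 2) / Real.sqrt (2 * Real.pi) / lam)) ∧
    Real.exp (1 / Real.sqrt 2) / Real.sqrt (2 * Real.pi) ≤ 1 := by
  have hC : 3 / (2 * √(2 * π)) ≤ exp (1 / √2) / √(2 * π) := by
    rw [← div_div]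
    refine div_le_div_of_nonneg_right ?_ (sqrt_nonneg _)
    have : 1 / 2 ≤ 1 / √2 := by gcongr; exact (sqrt_le_left (by norm_num)).2 (by norm_num)
    linarith [add_one_le_exp (1 / √2)]
  refine ⟨fun x => le_min ?_ ?_, (div_le_one (by positivity)).2 exp_inv_sqrt_two_le_sqrt_two_pi⟩
  · refine abs_sub_le_of_nonneg_of_le (poissonPmf_nonneg hlam.le x) (poissonPmf_le_one hlam.le x)
      ?_ ?_ <;> split_ifs
    exacts [le_rfl, poissonPmf_nonneg hlam.le _, zero_le_one, poissonPmf_le_one hlam.le _]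
  · rw [poissonPmf_sub_prev hlam.ne', abs_div, abs_of_pos hlam, abs_mul,
      abs_of_nonneg (poissonPmf_nonneg hlam.le x)]
    gcongr
    exact (abs_sub_mul_poissonPmf_le hlam.le x).trans hC
end

section
/- Let φ : ℕ → ℝ with φ(0) = 0 and φ(x) > 0 for x ≥ 1, and let λ, λ' > 0 be such that Z_λ < ∞ and Z_{λ'} < ∞. Let f : ℕ → ℝ be integrable with respect to both I_φ(λ) and I_φ(λ'), and let g : ℕ → ℝ be a bounded solution of the Stein equation for f with respect to I_φ(λ). Then |Σ_x f(x) I_φ(λ')(x) − Σ_x f(x) I_φ(λ)(x)| ≤ |λ − λ'| · sup_{x ∈ ℕ} |g(x)|. -/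
open scoped BigOperators

/-- The product `φ(1)⋯φ(x)` (empty product equal to `1`). -/
noncomputable def phiProd (φ : ℕ → ℝ) (x : ℕ) : ℝ := ∏ i ∈ Finset.range x, φ (i + 1)

/-- Normalizing constant `Z_λ = Σ_{x≥0} λ^x / (φ(1)⋯φ(x))`. -/
noncomputable def Zphi (φ : ℕ → ℝ) (lam : ℝ) : ℝ := ∑' x : ℕ, lam ^ x / phiProd φ x

/-- The probability measure `I_φ(λ)(x) = Z_λ⁻¹ λ^x / (φ(1)⋯φ(x))`. -/
noncomputable def Iphi (φ : ℕ → ℝ) (lam : ℝ) (x : ℕ) : ℝ :=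
  (lam ^ x / phiProd φ x) / Zphi φ lam

/-!
Write `π' = I_φ(λ')`. Since `φ(x+1) π'(x+1) = λ' π'(x)` and `φ(0) = 0`, summation
by parts gives `Σ φ(x) g(x) π'(x) = λ' Σ g(x+1) π'(x)` for bounded `g`: the Stein operator of
`I_φ(λ')` has mean zero under `π'`. Summing the Stein equation for `I_φ(λ)` against `π'` therefore
leaves `E_{λ'} f − E_λ f = (λ − λ') Σ g(x+1) π'(x)`, and the last sum is at most `sup |g|`.
-/

section BoundedMean

variable {p h : ℕ → ℝ} {M : ℝ}

theorem summable_mul_of_abs_le (hp : Summable p) (hp0 : ∀ x, 0 ≤ p x) (hh : ∀ x, |h x| ≤ M) :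
    Summable fun x => h x * p x :=
  Summable.of_norm_bounded (hp.mul_left M) fun x => by
    rw [Real.norm_eq_abs, abs_mul, abs_of_nonneg (hp0 x)]
    exact mul_le_mul_of_nonneg_right (hh x) (hp0 x)

theorem abs_tsum_mul_le_of_hasSum_one (hp : HasSum p 1) (hp0 : ∀ x, 0 ≤ p x)
    (hh : ∀ x, |h x| ≤ M) : |∑' x, h x * p x| ≤ M := by
  have hhp := (summable_mul_of_abs_le hp.summable hp0 hh).hasSum
  have hupper := hp.mul_left M
  have hlower := hp.mul_left (-M)
  rw [mul_one] at hupper hlower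
  refine abs_le.mpr ⟨hasSum_le (fun x => ?_) hlower hhp, hasSum_le (fun x => ?_) hhp hupper⟩
  · nlinarith [neg_abs_le (h x), hh x, hp0 x]
  · nlinarith [le_abs_self (h x), hh x, hp0 x]

end BoundedMean

/-- Summation by parts against a weight satisfying the detailed-balance relation of a
birth–death chain with birth rate `μ` and death rate `φ`. -/
theorem hasSum_mul_mul_of_balance {φ p g : ℕ → ℝ} {μ s : ℝ} (hφ0 : φ 0 = 0)
    (hbal : ∀ x, φ (x + 1) * p (x + 1) = μ * p x) (hs : HasSum (fun x => g (x + 1) * p x) s) :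
    HasSum (fun x => φ x * g x * p x) (μ * s) := by
  refine (hasSum_nat_add_iff' 1).mp ?_
  simp only [Finset.range_one, Finset.sum_singleton, hφ0, zero_mul, sub_zero]
  refine (hs.mul_left μ).congr_fun fun x => ?_
  linear_combination g (x + 1) * hbal x

section Iphi

variable {φ : ℕ → ℝ} {lam : ℝ}

theorem phiProd_succ (φ : ℕ → ℝ) (x : ℕ) : phiProd φ (x + 1) = phiProd φ x * φ (x + 1) :=
  Finset.prod_range_succ _ _

theorem phiProd_pos (hφ : ∀ x, 1 ≤ x → 0 < φ x) (x : ℕ) : 0 < phiProd φ x :=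
  Finset.prod_pos fun i _ => hφ (i + 1) (Nat.le_add_left 1 i)

theorem Zphi_pos (hφ : ∀ x, 1 ≤ x → 0 < φ x) (hlam : 0 < lam)
    (hZ : Summable fun x : ℕ => lam ^ x / phiProd φ x) : 0 < Zphi φ lam :=
  hZ.tsum_pos (fun x => (div_pos (pow_pos hlam x) (phiProd_pos hφ x)).le) 0 (by simp [phiProd])

theorem Iphi_nonneg (hφ : ∀ x, 1 ≤ x → 0 < φ x) (hlam : 0 < lam)
    (hZ : Summable fun x : ℕ => lam ^ x / phiProd φ x) (x : ℕ) : 0 ≤ Iphi φ lam x :=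
  (div_pos (div_pos (pow_pos hlam x) (phiProd_pos hφ x)) (Zphi_pos hφ hlam hZ)).le

theorem hasSum_Iphi (hZ : Summable fun x : ℕ => lam ^ x / phiProd φ x) (hZ0 : Zphi φ lam ≠ 0) :
    HasSum (Iphi φ lam) 1 := by
  have := hZ.hasSum.div_const (Zphi φ lam)
  rwa [← Zphi, div_self hZ0] at this

theorem Iphi_balance (x : ℕ) (hφx : φ (x + 1) ≠ 0) :
    φ (x + 1) * Iphi φ lam (x + 1) = lam * Iphi φ lam x := by
  simp only [Iphi, phiProd_succ]
  by_cases hπ : phiProd φ x = 0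
  · simp [hπ]
  field_simp
  ring

end Iphi

theorem Iphi_closeness_general (φ : ℕ → ℝ) (hφ0 : φ 0 = 0) (hφ : ∀ x : ℕ, 1 ≤ x → 0 < φ x)
    (lam lam' : ℝ) (hlam' : 0 < lam')
    (hZ' : Summable fun x : ℕ => lam' ^ x / phiProd φ x)
    (f : ℕ → ℝ)
    (hf' : Summable fun x : ℕ => |f x| * Iphi φ lam' x)
    (g : ℕ → ℝ)
    (hg : ∀ x : ℕ, lam * g (x + 1) - φ x * g x = f x - ∑' y : ℕ, f y * Iphi φ lam y)
    (hgbd : BddAbove (Set.range fun x : ℕ => |g x|)) :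
    |(∑' x : ℕ, f x * Iphi φ lam' x) - ∑' x : ℕ, f x * Iphi φ lam x| ≤
      |lam - lam'| * ⨆ x : ℕ, |g x| := by
  set p := Iphi φ lam'
  set Ef := ∑' y, f y * Iphi φ lam y
  have hp0 : ∀ x, 0 ≤ p x := Iphi_nonneg hφ hlam' hZ'
  have hp : HasSum p 1 := hasSum_Iphi hZ' (Zphi_pos hφ hlam' hZ').ne'
  have hgM : ∀ x, |g (x + 1)| ≤ ⨆ x, |g x| := fun x => le_ciSup hgbd (x + 1)
  have hfp : Summable fun x => f x * p x :=
    .of_abs (hf'.congr fun x => by rw [abs_mul, abs_of_nonneg (hp0 x)])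
  set S := ∑' x, g (x + 1) * p x
  have hS : HasSum (fun x => g (x + 1) * p x) S :=
    (summable_mul_of_abs_le hp.summable hp0 hgM).hasSum
  have hφgp : HasSum (fun x => φ x * g x * p x) (lam' * S) :=
    hasSum_mul_mul_of_balance hφ0 (fun x => Iphi_balance x (hφ (x + 1) (Nat.le_add_left 1 x)).ne') hS
  have hstein : HasSum (fun x => (f x - Ef) * p x) ((lam - lam') * S) := by
    rw [sub_mul]
    refine ((hS.mul_left lam).sub hφgp).congr_fun fun x => ?_
    rw [← hg x]
    ring
  have hcentered : HasSum (fun x => (f x - Ef) * p x) ((∑' x, f x * p x) - Ef) := by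
    simpa only [sub_mul, mul_one] using hfp.hasSum.sub (hp.mul_left Ef)
  rw [hcentered.unique hstein, abs_mul]
  exact mul_le_mul_of_nonneg_left (abs_tsum_mul_le_of_hasSum_one hp hp0 hgM) (abs_nonneg _)

/-- Closeness of two `I_φ(λ)` distributions: if `g` is a bounded solution of the Stein
equation for `f` with respect to `I_φ(λ)`, then
`|Σ f dI_φ(λ') − Σ f dI_φ(λ)| ≤ |λ − λ'| · sup_x |g(x)|`. -/
theorem Iphi_closeness (φ : ℕ → ℝ) (hφ0 : φ 0 = 0) (hφ : ∀ x : ℕ, 1 ≤ x → 0 < φ x)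
    (lam lam' : ℝ) (hlam : 0 < lam) (hlam' : 0 < lam')
    (hZ : Summable fun x : ℕ => lam ^ x / phiProd φ x)
    (hZ' : Summable fun x : ℕ => lam' ^ x / phiProd φ x)
    (f : ℕ → ℝ)
    (hf : Summable fun x : ℕ => |f x| * Iphi φ lam x)
    (hf' : Summable fun x : ℕ => |f x| * Iphi φ lam' x)
    (g : ℕ → ℝ)
    (hg : ∀ x : ℕ, lam * g (x + 1) - φ x * g x = f x - ∑' y : ℕ, f y * Iphi φ lam y)
    (hgbd : BddAbove (Set.range fun x : ℕ => |g x|)) :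
    |(∑' x : ℕ, f x * Iphi φ lam' x) - ∑' x : ℕ, f x * Iphi φ lam x| ≤
      |lam - lam'| * ⨆ x : ℕ, |g x| :=
  Iphi_closeness_general φ hφ0 hφ lam lam' hlam' hZ' f hf' g hg hgbd
end

section
/- Let φ : ℕ → ℝ with φ(0) = 0 and φ(x) > 0 for x ≥ 1, let λ, λ' > 0 be such that Z_λ < ∞ and Z_{λ'} < ∞, and let u : ℕ → (0,∞). Let f : ℕ → ℝ be integrable with respect to both I_φ(λ) and I_φ(λ'), and let g : ℕ → ℝ be a solution of the Stein equation for f with respect to I_φ(λ) such that M := sup_{x ∈ ℕ} |g(x)|/u(x) < ∞ and Σ_x u(x+1) I_φ(λ')(x) < ∞. Then |Σ_x f(x) I_φ(λ')(x) − Σ_x f(x) I_φ(λ)(x)| ≤ |λ − λ'| · M · Σ_x u(x+1) I_φ(λ')(x). -/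
open scoped BigOperators

/-- Weighted closeness of two `I_φ(λ)` distributions: if `g` solves the Stein equation
for `f` with respect to `I_φ(λ)` and `M = sup_x |g(x)|/u(x) < ∞`, then
`|Σ f dI_φ(λ') − Σ f dI_φ(λ)| ≤ |λ − λ'| · M · Σ_x u(x+1) I_φ(λ')(x)`. -/
theorem Iphi_closeness_weighted (φ : ℕ → ℝ) (hφ0 : φ 0 = 0)
    (hφ : ∀ x : ℕ, 1 ≤ x → 0 < φ x)
    (lam lam' : ℝ) (hlam : 0 < lam) (hlam' : 0 < lam')
    (hZ : Summable fun x : ℕ => lam ^ x / phiProd φ x)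
    (hZ' : Summable fun x : ℕ => lam' ^ x / phiProd φ x)
    (u : ℕ → ℝ) (hu : ∀ x : ℕ, 0 < u x)
    (f : ℕ → ℝ)
    (hf : Summable fun x : ℕ => |f x| * Iphi φ lam x)
    (hf' : Summable fun x : ℕ => |f x| * Iphi φ lam' x)
    (g : ℕ → ℝ)
    (hg : ∀ x : ℕ, lam * g (x + 1) - φ x * g x = f x - ∑' y : ℕ, f y * Iphi φ lam y)
    (hM : BddAbove (Set.range fun x : ℕ => |g x| / u x))
    (hu' : Summable fun x : ℕ => u (x + 1) * Iphi φ lam' x) :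
    |(∑' x : ℕ, f x * Iphi φ lam' x) - ∑' x : ℕ, f x * Iphi φ lam x| ≤
      |lam - lam'| * (⨆ x : ℕ, |g x| / u x) * ∑' x : ℕ, u (x + 1) * Iphi φ lam' x := by
  have hPpos : ∀ x, 0 < phiProd φ x := fun x =>
    Finset.prod_pos fun i _ => hφ (i + 1) (Nat.le_add_left 1 i)
  have hZ'pos : 0 < Zphi φ lam' :=
    Summable.tsum_pos hZ' (fun x => div_nonneg (pow_nonneg hlam'.le x) (hPpos x).le) 0 (by simp [phiProd])
  have hI'nonneg : ∀ x, 0 ≤ Iphi φ lam' x := fun x => by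
    have := hPpos x; unfold Iphi; positivity
  -- key identity
  have hkey : ∀ x, φ (x + 1) * Iphi φ lam' (x + 1) = lam' * Iphi φ lam' x := by
    intro x
    have hp := (hPpos x).ne'
    have hp1 := (hφ (x + 1) (Nat.le_add_left 1 x)).ne'
    have hps : phiProd φ (x + 1) = phiProd φ x * φ (x + 1) := Finset.prod_range_succ _ _
    unfold Iphi
    rw [hps, pow_succ]
    field_simp
  -- total mass 1
  have hsum1 : ∑' x, Iphi φ lam' x = 1 := by
    unfold Iphi
    rw [tsum_div_const]
    exact div_self hZ'pos.ne'
  have hI'sum : Summable (Iphi φ lam') := hZ'.div_const _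
  set M := ⨆ x : ℕ, |g x| / u x with hMdef
  have hMle : ∀ x, |g x| ≤ M * u x := by
    intro x
    have h1 : |g x| / u x ≤ M := le_ciSup hM x
    exact (div_le_iff₀ (hu x)).mp h1
  set c := ∑' y : ℕ, f y * Iphi φ lam y with hc
  have habs : ∀ x, |g (x + 1) * Iphi φ lam' x| ≤ M * (u (x + 1) * Iphi φ lam' x) := by
    intro x
    rw [abs_mul, abs_of_nonneg (hI'nonneg x), ← mul_assoc]
    exact mul_le_mul_of_nonneg_right (hMle (x + 1)) (hI'nonneg x)
  have hgabs : Summable (fun x => |g (x + 1) * Iphi φ lam' x|) :=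
    Summable.of_nonneg_of_le (fun x => abs_nonneg _) habs (hu'.mul_left M)
  have hgS : Summable (fun x => g (x + 1) * Iphi φ lam' x) := hgabs.of_abs
  have hfI' : Summable (fun x => f x * Iphi φ lam' x) := by
    apply Summable.of_abs
    refine hf'.congr fun x => ?_
    rw [abs_mul, abs_of_nonneg (hI'nonneg x)]
  -- h x = φ x * g x * I' x
  have hhshift : ∀ n : ℕ, φ (n + 1) * g (n + 1) * Iphi φ lam' (n + 1)
      = lam' * (g (n + 1) * Iphi φ lam' n) := by
    intro n
    calc φ (n + 1) * g (n + 1) * Iphi φ lam' (n + 1)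
        = g (n + 1) * (φ (n + 1) * Iphi φ lam' (n + 1)) := by ring
      _ = g (n + 1) * (lam' * Iphi φ lam' n) := by rw [hkey n]
      _ = lam' * (g (n + 1) * Iphi φ lam' n) := by ring
  have hhS : Summable (fun x => φ x * g x * Iphi φ lam' x) := by
    rw [← summable_nat_add_iff 1]
    exact (hgS.mul_left lam').congr fun n => (hhshift n).symm
  have hhtsum : ∑' x, φ x * g x * Iphi φ lam' x
      = lam' * ∑' x, g (x + 1) * Iphi φ lam' x := by
    rw [Summable.tsum_eq_zero_add hhS]
    simp only [hφ0, zero_mul, zero_add]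
    rw [tsum_congr hhshift, tsum_mul_left]
  have key : (∑' x, f x * Iphi φ lam' x) - c
      = (lam - lam') * ∑' x, g (x + 1) * Iphi φ lam' x := by
    have h1 : ∀ x, f x * Iphi φ lam' x - c * Iphi φ lam' x
        = lam * (g (x + 1) * Iphi φ lam' x) - φ x * g x * Iphi φ lam' x := by
      intro x
      have h3 : f x - c = lam * g (x + 1) - φ x * g x := (hg x).symm
      calc f x * Iphi φ lam' x - c * Iphi φ lam' x
          = (f x - c) * Iphi φ lam' x := by ring
        _ = (lam * g (x + 1) - φ x * g x) * Iphi φ lam' x := by rw [h3]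
        _ = lam * (g (x + 1) * Iphi φ lam' x) - φ x * g x * Iphi φ lam' x := by ring
    calc (∑' x, f x * Iphi φ lam' x) - c
        = (∑' x, f x * Iphi φ lam' x) - c * ∑' x, Iphi φ lam' x := by rw [hsum1, mul_one]
      _ = ∑' x, (f x * Iphi φ lam' x - c * Iphi φ lam' x) := by
          rw [← tsum_mul_left, Summable.tsum_sub hfI' (hI'sum.mul_left c)]
      _ = ∑' x, (lam * (g (x + 1) * Iphi φ lam' x) - φ x * g x * Iphi φ lam' x) :=
          tsum_congr h1
      _ = lam * (∑' x, g (x + 1) * Iphi φ lam' x) - ∑' x, φ x * g x * Iphi φ lam' x := by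
          rw [Summable.tsum_sub (hgS.mul_left lam) hhS, tsum_mul_left]
      _ = (lam - lam') * ∑' x, g (x + 1) * Iphi φ lam' x := by
          rw [hhtsum]; ring
  rw [key, abs_mul]
  rw [mul_assoc]
  apply mul_le_mul_of_nonneg_left _ (abs_nonneg _)
  calc |∑' x, g (x + 1) * Iphi φ lam' x| ≤ ∑' x, |g (x + 1) * Iphi φ lam' x| := by
        simpa only [Real.norm_eq_abs] using
          norm_tsum_le_tsum_norm (f := fun x => g (x + 1) * Iphi φ lam' x)
            (by simpa only [Real.norm_eq_abs] using hgabs)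
    _ ≤ ∑' x, M * (u (x + 1) * Iphi φ lam' x) := Summable.tsum_le_tsum habs hgabs (hu'.mul_left M)
    _ = M * ∑' x, u (x + 1) * Iphi φ lam' x := tsum_mul_left
end

section
/- Let 0 < α < β, set ρ = α/β and q = √(β/α), and let π = G(ρ) be the geometric distribution, π(k) = (1−ρ) ρ^k. For f : ℕ → ℝ with |f(x+1) − f(x)| ≤ q^x for all x ∈ ℕ (such f is π-integrable), let g_f : ℕ → ℝ satisfy α g_f(x+1) − β 1_{x≥1} g_f(x) = f(x) − Σ_y f(y) π(y) for all x ∈ ℕ (this determines g_f on ℕ∖{0}). Then: (i) the supremum over all such f of sup_{x ∈ ℕ} |g_f(x+1)|/q^x equals 1/(√β − √α)²; (ii) for every such f and every x ≥ 1, |g_f(x+1) − g_f(x)|/q^x ≤ (1/(√β − √α)²) · (1 + √(α/β) · min{ 1, 2√π (√β − √α)/(αβ)^{1/4} − 1 }). -/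
/-!
Write `E = geomMean ρ f` and `T = geomTail ρ f` with `ρ = α/β`. The Stein equation is solved
exactly by `g (n + 1) = -T (n + 1) / β`: the recursion `T n = f n - E + ρ T (n + 1)` handles
`x ≥ 1`, and the equation at `x = 0` amounts to `T 0 = 0`, which is precisely what `E` being the
`G(ρ)`-mean gives. The increments `T (n + 1) - T n = ∑' j, ρ ^ j (f (n + j + 1) - f (n + j))` are
at most `q ^ n / (1 - ρ q)`, with equality when `f` increases by exactly `q ^ x`. Hence
`|g (x + 2) - g (x + 1)| ≤ q ^ (x + 1) / (β (1 - ρ q))`, and telescoping from `T 0 = 0` gives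
`|g (x + 1)| / q ^ x ≤ (1 + q⁻¹ + ⋯ + q⁻ˣ) / (β (1 - ρ q))`, again with equality for that `f`;
these bounds increase to `1 / (β (1 - ρ q) (1 - q⁻¹)) = 1/(√β − √α)²` since `ρ q = q⁻¹ = √(α/β)`.
The difference bound is `1 - √(α/β)` times that constant, below the stated factor as the `min` is
at least `-1`.
-/

open Finset

noncomputable def geomMean (ρ : ℝ) (f : ℕ → ℝ) : ℝ := ∑' y, f y * ((1 - ρ) * ρ ^ y)

noncomputable def geomTail (ρ : ℝ) (f : ℕ → ℝ) (n : ℕ) : ℝ :=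
  ∑' j, ρ ^ j * (f (n + j) - geomMean ρ f)

def IsSteinSolution (a b ρ : ℝ) (f g : ℕ → ℝ) : Prop :=
  ∀ x, a * g (x + 1) - (if 1 ≤ x then b else 0) * g x = f x - geomMean ρ f

section

variable {ρ q : ℝ} {f : ℕ → ℝ}

theorem abs_sub_le_sum_of_abs_sub_succ_le {w : ℕ → ℝ}
    (hf : ∀ x, |f (x + 1) - f x| ≤ w x) (n : ℕ) : |f n - f 0| ≤ ∑ i ∈ range n, w i := by
  rw [abs_sub_comm, ← Real.dist_eq]
  exact dist_le_range_sum_of_dist_le n fun {k} _ => by rw [dist_comm, Real.dist_eq]; exact hf k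

theorem summable_pow_mul_of_abs_sub_succ_le {c : ℝ} (hρ : 0 ≤ ρ) (hq : 1 ≤ q) (hρq : ρ * q < 1)
    (hf : ∀ x, |f (x + 1) - f x| ≤ c * q ^ x) : Summable fun y => ρ ^ y * f y := by
  have hc : 0 ≤ c := by simpa using (abs_nonneg _).trans (hf 0)
  have hbound : ∀ y : ℕ, ‖ρ ^ y * f y‖ ≤ |f 0| * ρ ^ y + c * ((y : ℝ) ^ 1 * (ρ * q) ^ y) := by
    intro y
    have hgrowth : |f y - f 0| ≤ y * (c * q ^ y) := by
      refine (abs_sub_le_sum_of_abs_sub_succ_le hf y).trans ?_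
      simpa using Finset.sum_le_sum fun i (hi : i ∈ range y) =>
        mul_le_mul_of_nonneg_left (pow_le_pow_right₀ hq (mem_range.1 hi).le) hc
    calc ‖ρ ^ y * f y‖ = ρ ^ y * |f y| := by
          rw [Real.norm_eq_abs, abs_mul, abs_of_nonneg (pow_nonneg hρ y)]
      _ ≤ ρ ^ y * (|f 0| + y * (c * q ^ y)) := by
          gcongr; linarith [abs_sub_abs_le_abs_sub (f y) (f 0)]
      _ = _ := by ring
  have hρ1 : ρ < 1 := by nlinarith
  have hρq0 : 0 ≤ ρ * q := by positivity
  exact Summable.of_norm_bounded (((summable_geometric_of_lt_one hρ hρ1).mul_left |f 0|).add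
    ((summable_pow_mul_geometric_of_norm_lt_one 1 (by rwa [Real.norm_of_nonneg hρq0])).mul_left c))
    hbound

theorem summable_geomTail_term (hρ : 0 ≤ ρ) (hq : 1 ≤ q) (hρq : ρ * q < 1)
    (hf : ∀ x, |f (x + 1) - f x| ≤ q ^ x) (n : ℕ) :
    Summable fun j => ρ ^ j * (f (n + j) - geomMean ρ f) :=
  summable_pow_mul_of_abs_sub_succ_le (c := q ^ n) hρ hq hρq fun x => by
    simpa [← add_assoc, pow_add] using hf (n + x)

theorem geomTail_eq_add
    (hs : ∀ n, Summable fun j => ρ ^ j * (f (n + j) - geomMean ρ f)) (n : ℕ) :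
    geomTail ρ f n = f n - geomMean ρ f + ρ * geomTail ρ f (n + 1) := by
  rw [geomTail, (hs n).tsum_eq_zero_add, geomTail, ← tsum_mul_left]
  congr 1
  · simp
  · congr 1; ext j; rw [show n + (j + 1) = n + 1 + j by ring]; ring

theorem geomTail_zero (hρ : 0 ≤ ρ) (hρ1 : ρ < 1)
    (hs : Summable fun j => ρ ^ j * (f j - geomMean ρ f)) : geomTail ρ f 0 = 0 := by
  have hgeo := summable_geometric_of_lt_one hρ hρ1
  have hsf : Summable fun j => ρ ^ j * f j := by
    simpa [← mul_add] using hs.add (hgeo.mul_right (geomMean ρ f))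
  have hmean : geomMean ρ f = (1 - ρ) * ∑' j, ρ ^ j * f j := by
    rw [geomMean, ← tsum_mul_left]; congr 1; ext; ring
  have h1ρ : 1 - ρ ≠ 0 := by linarith
  simp only [geomTail, zero_add, mul_sub]
  rw [hsf.tsum_sub (hgeo.mul_right _), tsum_mul_right, tsum_geometric_of_lt_one hρ hρ1, hmean]
  field_simp
  ring

theorem geomTail_succ_sub
    (hs : ∀ n, Summable fun j => ρ ^ j * (f (n + j) - geomMean ρ f)) (n : ℕ) :
    geomTail ρ f (n + 1) - geomTail ρ f n = ∑' j, ρ ^ j * (f (n + j + 1) - f (n + j)) := by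
  rw [geomTail, geomTail, ← (hs (n + 1)).tsum_sub (hs n)]
  congr 1; ext j; rw [show n + 1 + j = n + j + 1 by ring]; ring

theorem abs_geomTail_succ_sub_le (hρ : 0 ≤ ρ) (hq : 1 ≤ q) (hρq : ρ * q < 1)
    (hf : ∀ x, |f (x + 1) - f x| ≤ q ^ x) (n : ℕ) :
    |geomTail ρ f (n + 1) - geomTail ρ f n| ≤ q ^ n / (1 - ρ * q) := by
  rw [geomTail_succ_sub (summable_geomTail_term hρ hq hρq hf), div_eq_mul_inv, ← Real.norm_eq_abs]
  refine tsum_of_norm_bounded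
    ((hasSum_geometric_of_lt_one (by positivity) hρq).mul_left (q ^ n)) fun j => ?_
  rw [Real.norm_eq_abs, abs_mul, abs_of_nonneg (pow_nonneg hρ j)]
  calc ρ ^ j * |f (n + j + 1) - f (n + j)| ≤ ρ ^ j * q ^ (n + j) := by gcongr; exact hf _
    _ = q ^ n * (ρ * q) ^ j := by ring

theorem geomTail_succ_sub_of_sub_eq (hρ : 0 ≤ ρ) (hq : 1 ≤ q) (hρq : ρ * q < 1)
    (hf : ∀ x, f (x + 1) - f x = q ^ x) (n : ℕ) :
    geomTail ρ f (n + 1) - geomTail ρ f n = q ^ n / (1 - ρ * q) := by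
  have hf' (x : ℕ) : |f (x + 1) - f x| ≤ q ^ x := by
    rw [hf x, abs_of_nonneg (by positivity)]
  rw [geomTail_succ_sub (summable_geomTail_term hρ hq hρq hf'), div_eq_mul_inv,
    ← ((hasSum_geometric_of_lt_one (by positivity) hρq).mul_left (q ^ n)).tsum_eq]
  congr 1; ext j; rw [hf]; ring
theorem isSteinSolution_iff (hb : b ≠ 0) (hρ : 0 < ρ) (hρ1 : ρ < 1) (hab : a = ρ * b)
    (hs : ∀ n, Summable fun j => ρ ^ j * (f (n + j) - geomMean ρ f)) :
    IsSteinSolution a b ρ f g ↔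
      ∀ n, g (n + 1) = -geomTail ρ f (n + 1) / b := by
  simp only [eq_div_iff hb]
  have hT0 := geomTail_zero hρ.le hρ1 (by simpa using hs 0)
  have hrec := geomTail_eq_add hs
  subst hab
  constructor
  · intro hg n
    induction n with
    | zero =>
      have hg0 := hg 0
      rw [if_neg (by omega), zero_mul, sub_zero] at hg0
      refine mul_left_cancel₀ hρ.ne' ?_
      linear_combination hg0 - hrec 0 + hT0
    | succ n ih =>
      have hgn := hg (n + 1)
      rw [if_pos (by omega)] at hgn
      refine mul_left_cancel₀ hρ.ne' ?_
      linear_combination hgn + ih - hrec (n + 1)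
  · intro h x
    rcases x with _ | n
    · rw [if_neg (by omega), zero_mul, sub_zero]
      linear_combination ρ * h 0 + hrec 0 - hT0
    · rw [if_pos (by omega)]
      linear_combination ρ * h (n + 1) - h n + hrec (n + 1)

theorem exists_isSteinSolution (hb : b ≠ 0) (hρ : 0 < ρ) (hq : 1 ≤ q) (hρq : ρ * q < 1)
    (hab : a = ρ * b) (hf : ∀ x, |f (x + 1) - f x| ≤ q ^ x) :
    ∃ g, IsSteinSolution a b ρ f g := by
  have hρ1 : ρ < 1 := by nlinarith
  refine ⟨fun n => -geomTail ρ f n / b, ?_⟩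
  exact (isSteinSolution_iff (g := fun n => -geomTail ρ f n / b) hb hρ hρ1 hab
    (summable_geomTail_term hρ.le hq hρq hf)).2 fun _ => rfl

theorem IsSteinSolution.abs_le (hb : 0 < b) (hρ : 0 < ρ) (hq : 1 ≤ q) (hρq : ρ * q < 1)
    (hab : a = ρ * b) (hf : ∀ x, |f (x + 1) - f x| ≤ q ^ x)
    (hg : IsSteinSolution a b ρ f g) (x : ℕ) :
    |g (x + 1)| ≤ (∑ m ∈ range (x + 1), q ^ m) / (b * (1 - ρ * q)) := by
  have hρ1 : ρ < 1 := by nlinarith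
  have hs := summable_geomTail_term hρ.le hq hρq hf
  have hT := abs_sub_le_sum_of_abs_sub_succ_le (abs_geomTail_succ_sub_le hρ.le hq hρq hf) (x + 1)
  rw [geomTail_zero hρ.le hρ1 (by simpa using hs 0), sub_zero, ← sum_div] at hT
  rw [(isSteinSolution_iff hb.ne' hρ hρ1 hab hs).1 hg x, abs_div, abs_neg, abs_of_pos hb, mul_comm,
    ← div_div]
  exact div_le_div_of_nonneg_right hT hb.le

theorem IsSteinSolution.abs_sub_div_le (hb : 0 < b) (hρ : 0 < ρ) (hq : 1 ≤ q) (hρq : ρ * q < 1)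
    (hab : a = ρ * b) (hf : ∀ x, |f (x + 1) - f x| ≤ q ^ x)
    (hg : IsSteinSolution a b ρ f g) (x : ℕ) :
    |g (x + 2) - g (x + 1)| / q ^ (x + 1) ≤ 1 / (b * (1 - ρ * q)) := by
  have hsol := (isSteinSolution_iff hb.ne' hρ (by nlinarith) hab
    (summable_geomTail_term hρ.le hq hρq hf)).1 hg
  have hT := abs_geomTail_succ_sub_le hρ.le hq hρq hf (x + 1)
  rw [le_div_iff₀ (sub_pos.2 hρq)] at hT
  rw [hsol, hsol, ← sub_div, abs_div, abs_of_pos hb, neg_sub_neg, abs_sub_comm, div_div,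
    div_le_div_iff₀ (by positivity) (by positivity), one_mul]
  calc _ = b * (|geomTail ρ f (x + 1 + 1) - geomTail ρ f (x + 1)| * (1 - ρ * q)) := by ring
    _ ≤ b * q ^ (x + 1) := by gcongr

theorem IsSteinSolution.eq_of_sub_eq (hb : 0 < b) (hρ : 0 < ρ) (hq : 1 ≤ q) (hρq : ρ * q < 1)
    (hab : a = ρ * b) (hf : ∀ x, f (x + 1) - f x = q ^ x)
    (hg : IsSteinSolution a b ρ f g) (x : ℕ) :
    g (x + 1) = -(∑ m ∈ range (x + 1), q ^ m) / (b * (1 - ρ * q)) := by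
  have hρ1 : ρ < 1 := by nlinarith
  have hf' (x : ℕ) : |f (x + 1) - f x| ≤ q ^ x := by
    rw [hf x, abs_of_nonneg (by positivity)]
  have hs := summable_geomTail_term hρ.le hq hρq hf'
  have hT := sum_range_sub (geomTail ρ f) (x + 1)
  rw [geomTail_zero hρ.le hρ1 (by simpa using hs 0), sub_zero] at hT
  simp only [geomTail_succ_sub_of_sub_eq hρ.le hq hρq hf, ← sum_div] at hT
  rw [(isSteinSolution_iff hb.ne' hρ hρ1 hab hs).1 hg x, ← hT, neg_div, neg_div, div_div,
    mul_comm b]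

theorem sum_range_succ_pow_div_pow (hq : q ≠ 0) (x : ℕ) :
    (∑ m ∈ range (x + 1), q ^ m) / q ^ x = ∑ k ∈ range (x + 1), q⁻¹ ^ k := by
  rw [sum_div, ← sum_range_reflect (fun k => q⁻¹ ^ k)]
  refine sum_congr rfl fun k hk => ?_
  rw [show x + 1 - 1 - k = x - k by omega,
    pow_sub₀ _ (inv_ne_zero hq) (Nat.lt_succ_iff.1 (mem_range.1 hk))]
  simp only [inv_pow]
  field_simp

theorem isLUB_stein_ratio (hb : 0 < b) (hρ : 0 < ρ) (hq : 1 < q) (hρq : ρ * q < 1)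
    (hab : a = ρ * b) :
    IsLUB {M : ℝ | ∃ f g : ℕ → ℝ, (∀ x, |f (x + 1) - f x| ≤ q ^ x) ∧
        IsSteinSolution a b ρ f g ∧
        ∃ x : ℕ, M = |g (x + 1)| / q ^ x}
      ((1 - q⁻¹)⁻¹ / (b * (1 - ρ * q))) := by
  have hd : 0 < b * (1 - ρ * q) := mul_pos hb (sub_pos.2 hρq)
  have hgeo := hasSum_geometric_of_lt_one (inv_nonneg.2 (by linarith)) (inv_lt_one_of_one_lt₀ hq)
  have hratio (x : ℕ) : (∑ m ∈ range (x + 1), q ^ m) / (b * (1 - ρ * q)) / q ^ x =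
      (∑ k ∈ range (x + 1), q⁻¹ ^ k) / (b * (1 - ρ * q)) := by
    rw [div_right_comm, sum_range_succ_pow_div_pow (by positivity)]
  constructor
  · rintro M ⟨f, g, hf, hg, x, rfl⟩
    calc |g (x + 1)| / q ^ x ≤ (∑ m ∈ range (x + 1), q ^ m) / (b * (1 - ρ * q)) / q ^ x := by
          gcongr; exact IsSteinSolution.abs_le hb hρ hq.le hρq hab hf hg x
      _ = _ := hratio x
      _ ≤ _ := by gcongr; exact sum_le_hasSum _ (fun k _ => by positivity) hgeo
  · intro M hM
    set f₀ : ℕ → ℝ := fun k => ∑ i ∈ range k, q ^ i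
    have hf₀ (x : ℕ) : f₀ (x + 1) - f₀ x = q ^ x := sum_range_succ_sub_sum _
    obtain ⟨g₀, hg₀⟩ := exists_isSteinSolution hb.ne' hρ hq.le hρq hab fun x => by
      rw [hf₀, abs_of_pos (by positivity)]
    refine le_of_tendsto' ((hgeo.tendsto_sum_nat.comp (Filter.tendsto_add_atTop_nat 1)).div_const _)
      fun x => hM ⟨f₀, g₀, fun x => by rw [hf₀, abs_of_pos (by positivity)], hg₀, x, ?_⟩
    rw [IsSteinSolution.eq_of_sub_eq hb hρ hq.le hρq hab hf₀ hg₀, abs_div, abs_neg, abs_of_pos hd,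
      abs_of_nonneg (by positivity), hratio]
    rfl

end

theorem div_mul_sqrt_div {a b : ℝ} (ha : 0 < a) (hb : 0 < b) : a / b * √(b / a) = √(a / b) := by
  rw [Real.sqrt_div' _ ha.le, Real.sqrt_div' _ hb.le]
  have := Real.sq_sqrt ha.le
  have := Real.sq_sqrt hb.le
  have := Real.sqrt_pos.2 ha
  have := Real.sqrt_pos.2 hb
  field_simp
  nlinarith

theorem mul_one_sub_sqrt_div_sq {a b : ℝ} (hb : 0 < b) :
    b * (1 - √(a / b)) ^ 2 = (√b - √a) ^ 2 := by
  rw [Real.sqrt_div' _ hb.le]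
  have := Real.sq_sqrt hb.le
  have := Real.sqrt_pos.2 hb
  field_simp
  nlinarith

theorem one_div_mul_one_sub_le_mul_one_add {c t μ : ℝ} (hc : 0 < c) (ht0 : 0 ≤ t) (ht1 : t < 1)
    (hμ : -1 ≤ μ) : 1 / (c * (1 - t)) ≤ 1 / (c * (1 - t) ^ 2) * (1 + t * μ) := by
  have h1t : 0 < 1 - t := sub_pos.2 ht1
  calc 1 / (c * (1 - t)) = 1 / (c * (1 - t) ^ 2) * (1 - t) := by field_simp
    _ ≤ _ := by gcongr; nlinarith

/-- Stein factors for Lipschitz functions (with respect to the weight `q^x`,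
`q = √(β/α)`) and geometric approximation, for the M/M/1 Stein operator
`α g(x+1) − β 1_{x≥1} g(x)` with invariant law `G(ρ)`, `ρ = α/β`:
(i) the supremum over all admissible `f` of `sup_x |g_f(x+1)|/q^x` equals
`1/(√β − √α)²`;
(ii) for every admissible `f` and every `x ≥ 1`,
`|g_f(x+1) − g_f(x)|/q^x ≤ (1/(√β − √α)²)(1 + √(α/β) min(1, 2√π(√β − √α)/(αβ)^{1/4} − 1))`. -/
theorem geometric_stein_factors_lipschitz (a b : ℝ) (ha : 0 < a) (hab : a < b) :
    IsLUB
      {M : ℝ | ∃ f g : ℕ → ℝ,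
        (∀ x : ℕ, |f (x + 1) - f x| ≤ Real.sqrt (b / a) ^ x) ∧
        (∀ x : ℕ, a * g (x + 1) - (if 1 ≤ x then b else 0) * g x =
          f x - ∑' y : ℕ, f y * ((1 - a / b) * (a / b) ^ y)) ∧
        ∃ x : ℕ, M = |g (x + 1)| / Real.sqrt (b / a) ^ x}
      (1 / (Real.sqrt b - Real.sqrt a) ^ 2) ∧
    (∀ f g : ℕ → ℝ,
      (∀ x : ℕ, |f (x + 1) - f x| ≤ Real.sqrt (b / a) ^ x) →
      (∀ x : ℕ, a * g (x + 1) - (if 1 ≤ x then b else 0) * g x =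
        f x - ∑' y : ℕ, f y * ((1 - a / b) * (a / b) ^ y)) →
      ∀ x : ℕ, 1 ≤ x →
        |g (x + 1) - g x| / Real.sqrt (b / a) ^ x ≤
          (1 / (Real.sqrt b - Real.sqrt a) ^ 2) *
            (1 + Real.sqrt (a / b) *
              min 1 (2 * Real.sqrt Real.pi * (Real.sqrt b - Real.sqrt a) /
                (a * b) ^ ((1 : ℝ) / 4) - 1))) := by
  have hb : 0 < b := ha.trans hab
  have hρ : 0 < a / b := div_pos ha hb
  have ht0 : 0 < √(a / b) := Real.sqrt_pos.2 hρ
  have ht1 : √(a / b) < 1 :=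
    (Real.sqrt_lt' one_pos).2 (by rw [one_pow]; exact (div_lt_one hb).2 hab)
  have hq : (√(b / a))⁻¹ = √(a / b) := by rw [← Real.sqrt_inv, inv_div]
  have hρq := div_mul_sqrt_div ha hb
  have hq1 : 1 < √(b / a) := by rw [← inv_inv √(b / a), hq]; exact one_lt_inv₀ ht0 |>.2 ht1
  have hρq1 : a / b * √(b / a) < 1 := hρq ▸ ht1
  have hρb : a = a / b * b := (div_mul_cancel₀ a hb.ne').symm
  have hK : 0 ≤ 2 * √Real.pi * (√b - √a) / (a * b) ^ (1 / 4 : ℝ) := by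
    have := sub_nonneg.2 (Real.sqrt_le_sqrt hab.le)
    positivity
  rw [← mul_one_sub_sqrt_div_sq hb]
  refine ⟨?_, fun f g hf hg x hx => ?_⟩
  · have hC : 1 / (b * (1 - √(a / b)) ^ 2) =
        (1 - (√(b / a))⁻¹)⁻¹ / (b * (1 - a / b * √(b / a))) := by
      rw [hq, hρq]; field_simp
    rw [hC]
    exact isLUB_stein_ratio hb hρ hq1 hρq1 hρb
  · obtain ⟨m, rfl⟩ := Nat.exists_eq_add_of_le' hx
    refine (IsSteinSolution.abs_sub_div_le hb hρ hq1.le hρq1 hρb hf hg m).trans ?_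
    rw [hρq]
    exact one_div_mul_one_sub_le_mul_one_add hb ht0.le ht1 (le_min (by norm_num) (by linarith))
end

section
/- Let ρ, ρ' ∈ (0,1) with ρ' < √ρ. Then for every f : ℕ → ℝ with |f(x+1) − f(x)| ≤ ρ^{−x/2} for all x ∈ ℕ (such f is integrable with respect to both G(ρ) and G(ρ')), |Σ_k f(k) G(ρ)(k) − Σ_k f(k) G(ρ')(k)| ≤ |ρ − ρ'| · (1−ρ') / ((1−√ρ)² (√ρ − ρ')). -/
/-!
Summation by parts writes the `G(r)`-expectation of `f` as `f 0 + ∑ (f (k+1) - f k) r^(k+1)`, so the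
difference of the two expectations is `∑ (f (k+1) - f k) (ρ^(k+1) - ρ'^(k+1))`. With `S = √ρ` the
increments are at most `S⁻ᵏ`, and since `ρ^(k+1) - ρ'^(k+1)` has the sign of `ρ - ρ'` for every `k`,
`∑ S⁻ᵏ |ρ^(k+1) - ρ'^(k+1)|` is a difference of two geometric series, equal to
`|ρ - ρ'| S / ((1 - S) (S - ρ'))`. This is at most the stated bound because `S (1 - S) ≤ 1 - ρ'`.
-/

section Increments

variable {f : ℕ → ℝ} {c : ℝ}

lemma abs_le_abs_zero_add_mul_pow (hc : 1 ≤ c) (hf : ∀ x, |f (x + 1) - f x| ≤ c ^ x) (k : ℕ) :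
    |f k| ≤ |f 0| + k * c ^ k := by
  induction k with
  | zero => simp
  | succ n ih =>
    have hstep : |f (n + 1)| ≤ |f n| + c ^ n := by
      linarith [abs_sub_abs_le_abs_sub (f (n + 1)) (f n), hf n]
    have hmono : c ^ n ≤ c ^ (n + 1) := pow_le_pow_right₀ hc n.le_succ
    push_cast
    nlinarith [(Nat.cast_nonneg n : (0 : ℝ) ≤ n)]

lemma summable_mul_pow_of_abs_sub_le_pow (hc : 1 ≤ c) (hf : ∀ x, |f (x + 1) - f x| ≤ c ^ x)
    {r : ℝ} (hr : 0 ≤ r) (hcr : c * r < 1) : Summable fun k ↦ f k * r ^ k := by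
  have hr1 : r < 1 := by nlinarith
  have hcr0 : 0 ≤ c * r := by positivity
  have hpoly : Summable fun k : ℕ ↦ (k : ℝ) * (c * r) ^ k := by
    simpa using summable_pow_mul_geometric_of_norm_lt_one (R := ℝ) 1
      (by rwa [Real.norm_eq_abs, abs_of_nonneg hcr0])
  refine .of_norm_bounded (((summable_geometric_of_lt_one hr hr1).mul_left |f 0|).add hpoly)
    fun k ↦ ?_
  calc ‖f k * r ^ k‖ = |f k| * r ^ k := by
        rw [Real.norm_eq_abs, abs_mul, abs_of_nonneg (pow_nonneg hr k)]
    _ ≤ (|f 0| + k * c ^ k) * r ^ k := by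
        gcongr; exact abs_le_abs_zero_add_mul_pow hc hf k
    _ = |f 0| * r ^ k + k * (c * r) ^ k := by ring

end Increments

section SummationByParts

variable {f : ℕ → ℝ}

lemma hasSum_sub_mul_pow_succ {r : ℝ} (hf : Summable fun k ↦ f k * r ^ k) :
    HasSum (fun k ↦ (f (k + 1) - f k) * r ^ (k + 1))
      ((∑' k, f k * ((1 - r) * r ^ k)) - f 0) := by
  set F := ∑' k, f k * r ^ k
  have hshift : HasSum (fun k ↦ f (k + 1) * r ^ (k + 1)) (F - f 0) := by
    simpa using (hasSum_nat_add_iff' 1).2 hf.hasSum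
  have htsum : ∑' k, f k * ((1 - r) * r ^ k) = (1 - r) * F := by
    rw [← tsum_mul_left]; congr 1 with k; ring
  rw [htsum, show (1 - r) * F - f 0 = (F - f 0) - r * F by ring]
  exact (hshift.sub (hf.hasSum.mul_left r)).congr_fun fun k ↦ by ring

lemma tsum_mul_geometric_sub_tsum_mul_geometric {x y : ℝ}
    (hx : Summable fun k ↦ f k * x ^ k) (hy : Summable fun k ↦ f k * y ^ k) :
    (∑' k, f k * ((1 - x) * x ^ k)) - ∑' k, f k * ((1 - y) * y ^ k) =
      ∑' k, (f (k + 1) - f k) * (x ^ (k + 1) - y ^ (k + 1)) := by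
  rw [(((hasSum_sub_mul_pow_succ hx).sub (hasSum_sub_mul_pow_succ hy)).congr_fun
    fun k ↦ mul_sub _ _ _).tsum_eq]
  ring

end SummationByParts

lemma hasSum_pow_mul_abs_pow_succ_sub_pow_succ {c x y : ℝ} (hc : 0 ≤ c) (hx : 0 ≤ x) (hy : 0 ≤ y)
    (hcx : c * x < 1) (hcy : c * y < 1) :
    HasSum (fun k ↦ c ^ k * |x ^ (k + 1) - y ^ (k + 1)|) (|x - y| / ((1 - c * x) * (1 - c * y))) := by
  wlog hyx : y ≤ x generalizing x y
  · simpa only [abs_sub_comm, mul_comm (1 - c * y)] using this hy hx hcy hcx (le_of_not_ge hyx)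
  have hgeom {z : ℝ} (hz : 0 ≤ z) (hcz : c * z < 1) :
      HasSum (fun k ↦ c ^ k * z ^ (k + 1)) (z / (1 - c * z)) :=
    ((hasSum_geometric_of_lt_one (by positivity) hcz).mul_left z).congr_fun fun k ↦ by ring
  have hne : ∀ z, c * z < 1 → 1 - c * z ≠ 0 := fun z h ↦ by linarith
  rw [abs_of_nonneg (sub_nonneg.2 hyx), show (x - y) / ((1 - c * x) * (1 - c * y)) =
    x / (1 - c * x) - y / (1 - c * y) by rw [div_sub_div _ _ (hne x hcx) (hne y hcy)]; ring]
  refine ((hgeom hx hcx).sub (hgeom hy hcy)).congr_fun fun k ↦ ?_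
  rw [abs_of_nonneg (sub_nonneg.2 (pow_le_pow_left₀ hy hyx _)), mul_sub]

lemma abs_tsum_mul_pow_succ_sub_pow_succ_le {d : ℕ → ℝ} {c x y : ℝ} (hd : ∀ k, |d k| ≤ c ^ k)
    (hc : 0 ≤ c) (hx : 0 ≤ x) (hy : 0 ≤ y) (hcx : c * x < 1) (hcy : c * y < 1) :
    |∑' k, d k * (x ^ (k + 1) - y ^ (k + 1))| ≤ |x - y| / ((1 - c * x) * (1 - c * y)) :=
  tsum_of_norm_bounded (hasSum_pow_mul_abs_pow_succ_sub_pow_succ hc hx hy hcx hcy) fun k ↦ by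
    rw [Real.norm_eq_abs, abs_mul]
    gcongr
    exact hd k

/-- Weighted Wasserstein bound between two geometric distributions `G(ρ)` and `G(ρ')`
with `ρ' < √ρ`: for every `f` with `|f(x+1) − f(x)| ≤ ρ^{−x/2}`,
`|Σ f dG(ρ) − Σ f dG(ρ')| ≤ |ρ − ρ'| (1−ρ') / ((1−√ρ)² (√ρ − ρ'))`. -/
theorem geometric_closeness (ρ ρ' : ℝ) (h1 : 0 < ρ) (h2 : ρ < 1)
    (h3 : 0 < ρ') (h4 : ρ' < Real.sqrt ρ)
    (f : ℕ → ℝ) (hf : ∀ x : ℕ, |f (x + 1) - f x| ≤ (Real.sqrt ρ)⁻¹ ^ x) :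
    |(∑' k : ℕ, f k * ((1 - ρ) * ρ ^ k)) - ∑' k : ℕ, f k * ((1 - ρ') * ρ' ^ k)| ≤
      |ρ - ρ'| * (1 - ρ') / ((1 - Real.sqrt ρ) ^ 2 * (Real.sqrt ρ - ρ')) := by
  set S := Real.sqrt ρ
  have hS0 : 0 < S := Real.sqrt_pos.2 h1
  have hS1 : S < 1 := (Real.sqrt_lt' one_pos).2 (by simpa using h2)
  have hcρ : S⁻¹ * ρ = S := (inv_mul_eq_iff_eq_mul₀ hS0.ne').2 (Real.mul_self_sqrt h1.le).symm
  have hcρ1 : S⁻¹ * ρ < 1 := by rwa [hcρ]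
  have hcρ'1 : S⁻¹ * ρ' < 1 := by rwa [inv_mul_lt_one₀ hS0]
  have hc1 : 1 ≤ S⁻¹ := (one_le_inv₀ hS0).2 hS1.le
  have hconst : 1 / ((1 - S) * (1 - S⁻¹ * ρ')) ≤ (1 - ρ') / ((1 - S) ^ 2 * (S - ρ')) := by
    have hpos : 0 < (1 - S) * (S - ρ') := mul_pos (by linarith) (by linarith)
    rw [show 1 / ((1 - S) * (1 - S⁻¹ * ρ')) = S / ((1 - S) * (S - ρ')) by field_simp,
      div_le_div_iff₀ hpos (by positivity)]
    nlinarith [mul_le_mul_of_nonneg_left (show S * (1 - S) ≤ 1 - ρ' by nlinarith) hpos.le]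
  rw [tsum_mul_geometric_sub_tsum_mul_geometric
    (summable_mul_pow_of_abs_sub_le_pow hc1 hf h1.le hcρ1)
    (summable_mul_pow_of_abs_sub_le_pow hc1 hf h3.le hcρ'1)]
  calc _ ≤ |ρ - ρ'| / ((1 - S⁻¹ * ρ) * (1 - S⁻¹ * ρ')) :=
        abs_tsum_mul_pow_succ_sub_pow_succ_le hf (by positivity) h1.le h3.le hcρ1 hcρ'1
    _ = |ρ - ρ'| * (1 / ((1 - S) * (1 - S⁻¹ * ρ'))) := by rw [hcρ, mul_one_div]
    _ ≤ |ρ - ρ'| * ((1 - ρ') / ((1 - S) ^ 2 * (S - ρ'))) := by gcongr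
    _ = |ρ - ρ'| * (1 - ρ') / ((1 - S) ^ 2 * (S - ρ')) := (mul_div_assoc ..).symm
end

section
/- In the birth-death setting, for every j ∈ ℕ the function g_j satisfies: (a) α(i) g_j(i+1) − β(i) g_j(i) = 1_{i=j} − π(j) for all i ∈ ℕ; (b) for all i ≥ 1, g_j(i+1) − g_j(i) = π(j) [ (e_{i−1}^+ − e_i^+) 1_{j ≥ i+1} + (e_{i+1}^- + e_{i−1}^+) 1_{i=j} + (e_{i+1}^- − e_i^-) 1_{j ≤ i−1} ]. -/
/-! Multiplied by `β(i) π(i)`, the function `g_j` becomes `π(j) (1_{j<i} − π({0, …, i−1}))`: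
for `i ≥ 1` this is the identity `β(i) π(i) e_{i−1}^+ = α(i−1) π(i−1) e_{i−1}^+ = π({0, …, i−1})`
(detailed balance) resp. `β(i) π(i) e_i^- = π({i, i+1, …})`, and for `i = 0` it is `β(0) = 0`.
Detailed balance also turns `π(i)` times the left side of the Stein equation into the increment of
this weighted function, which is `π(j) (1_{i=j} − π(i))`. The increment formula for `g_j` itself
is a case analysis on the definition. -/

open scoped BigOperators

/-- `w(x) = ∏_{y=1}^x α(y−1)/β(y)` (empty product equal to `1`). -/
noncomputable def bdW (a b : ℕ → ℝ) (x : ℕ) : ℝ := ∏ y ∈ Finset.range x, a y / b (y + 1)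

/-- The invariant probability measure `π` of the birth-death process:
`π(x) = π(0) ∏_{y=1}^x α(y−1)/β(y)` with `π(0) = (Σ_{x≥0} w(x))⁻¹`. -/
noncomputable def bdPi (a b : ℕ → ℝ) (x : ℕ) : ℝ := bdW a b x / ∑' y : ℕ, bdW a b y

/-- `e_i^+ = (Σ_{k=0}^i π(k)) / (α(i) π(i))`. -/
noncomputable def ePlus (a b : ℕ → ℝ) (i : ℕ) : ℝ :=
  (∑ k ∈ Finset.range (i + 1), bdPi a b k) / (a i * bdPi a b i)

/-- `e_i^- = (Σ_{k=i}^∞ π(k)) / (β(i) π(i))`. -/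
noncomputable def eMinus (a b : ℕ → ℝ) (i : ℕ) : ℝ :=
  (∑' k : ℕ, bdPi a b (i + k)) / (b i * bdPi a b i)

/-- `g_j(0) = 0` and `g_j(i) = π(j)(−e_{i−1}^+ 1_{i≤j} + e_i^- 1_{i≥j+1})` for `i ≥ 1`. -/
noncomputable def gBD (a b : ℕ → ℝ) (j i : ℕ) : ℝ :=
  if i = 0 then 0
  else bdPi a b j *
    ((if i ≤ j then -ePlus a b (i - 1) else 0) + (if j + 1 ≤ i then eMinus a b i else 0))

open Finset

section BirthDeath

variable {a b : ℕ → ℝ}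

lemma bdW_pos (ha : ∀ x, 0 < a x) (hb : ∀ x, 1 ≤ x → 0 < b x) (x : ℕ) : 0 < bdW a b x :=
  prod_pos fun y _ => div_pos (ha y) (hb (y + 1) (Nat.le_add_left 1 y))

lemma tsum_bdW_pos (ha : ∀ x, 0 < a x) (hb : ∀ x, 1 ≤ x → 0 < b x)
    (hw : Summable (bdW a b)) : 0 < ∑' y, bdW a b y :=
  hw.tsum_pos (fun y => (bdW_pos ha hb y).le) 0 (bdW_pos ha hb 0)

lemma bdPi_pos (ha : ∀ x, 0 < a x) (hb : ∀ x, 1 ≤ x → 0 < b x) (hw : Summable (bdW a b))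
    (x : ℕ) : 0 < bdPi a b x :=
  div_pos (bdW_pos ha hb x) (tsum_bdW_pos ha hb hw)

lemma bdPi_detailed_balance {i : ℕ} (hbi : b (i + 1) ≠ 0) :
    a i * bdPi a b i = b (i + 1) * bdPi a b (i + 1) := by
  simp only [bdPi, bdW, prod_range_succ]
  field_simp

lemma sum_range_add_tsum_bdPi (hw : Summable (bdW a b)) (hS : ∑' y, bdW a b y ≠ 0) (i : ℕ) :
    ∑ k ∈ range i, bdPi a b k + ∑' k, bdPi a b (i + k) = 1 := by
  simp only [bdPi, ← sum_div, tsum_div_const, ← add_div, add_comm i, hw.sum_add_tsum_nat_add,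
    div_self hS]

lemma mul_ePlus {i : ℕ} (h : a i * bdPi a b i ≠ 0) :
    a i * bdPi a b i * ePlus a b i = ∑ k ∈ range (i + 1), bdPi a b k :=
  mul_div_cancel₀ _ h

lemma mul_eMinus {i : ℕ} (h : b i * bdPi a b i ≠ 0) :
    b i * bdPi a b i * eMinus a b i = ∑' k, bdPi a b (i + k) :=
  mul_div_cancel₀ _ h

lemma mul_gBD (ha : ∀ x, 0 < a x) (hb0 : b 0 = 0) (hb : ∀ x, 1 ≤ x → 0 < b x)
    (hw : Summable (bdW a b)) (j i : ℕ) :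
    b i * bdPi a b i * gBD a b j i =
      bdPi a b j * ((if j < i then 1 else 0) - ∑ k ∈ range i, bdPi a b k) := by
  cases i with
  | zero => simp [gBD, hb0]
  | succ m =>
    have hpi := bdPi_pos ha hb hw
    have hbm : b (m + 1) ≠ 0 := (hb _ (Nat.le_add_left 1 m)).ne'
    have hplus : b (m + 1) * bdPi a b (m + 1) * ePlus a b m = ∑ k ∈ range (m + 1), bdPi a b k := by
      rw [← bdPi_detailed_balance hbm, mul_ePlus (mul_ne_zero (ha m).ne' (hpi m).ne')]
    have hminus := mul_eMinus (mul_ne_zero hbm (hpi (m + 1)).ne')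
    have htot := sum_range_add_tsum_bdPi hw (tsum_bdW_pos ha hb hw).ne' (m + 1)
    simp only [gBD, Nat.add_one_ne_zero, if_false, Nat.add_sub_cancel]
    split_ifs <;> first
      | omega
      | linear_combination (-bdPi a b j) * hplus
      | linear_combination (bdPi a b j) * (hminus + htot)

lemma gBD_succ_sub (j i : ℕ) (hi : 1 ≤ i) :
    gBD a b j (i + 1) - gBD a b j i =
      bdPi a b j *
        ((if i + 1 ≤ j then ePlus a b (i - 1) - ePlus a b i else 0) +
         (if i = j then eMinus a b (i + 1) + ePlus a b (i - 1) else 0) +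
         (if j ≤ i - 1 then eMinus a b (i + 1) - eMinus a b i else 0)) := by
  obtain ⟨m, rfl⟩ := Nat.exists_eq_add_of_le' hi
  simp only [gBD, Nat.add_one_ne_zero, if_false, Nat.add_sub_cancel]
  split_ifs <;> first | omega | ring

lemma gBD_stein (ha : ∀ x, 0 < a x) (hb0 : b 0 = 0) (hb : ∀ x, 1 ≤ x → 0 < b x)
    (hw : Summable (bdW a b)) (j i : ℕ) :
    a i * gBD a b j (i + 1) - b i * gBD a b j i = (if i = j then 1 else 0) - bdPi a b j := by
  have hnext := mul_gBD ha hb0 hb hw j (i + 1)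
  have hcur := mul_gBD ha hb0 hb hw j i
  rw [← bdPi_detailed_balance (hb (i + 1) (Nat.le_add_left 1 i)).ne', sum_range_succ] at hnext
  apply mul_left_cancel₀ (bdPi_pos ha hb hw i).ne'
  rcases eq_or_ne i j with rfl | hij
  · simp only [lt_irrefl, lt_add_one, if_true, if_false] at hnext hcur ⊢
    linear_combination hnext - hcur
  · have hlt : j < i + 1 ↔ j < i := by omega
    simp only [hlt, hij, if_false] at hnext ⊢
    linear_combination hnext - hcur

end BirthDeath

/-- In the birth-death setting, `g_j` satisfies the Stein equation
`α(i) g_j(i+1) − β(i) g_j(i) = 1_{i=j} − π(j)` and the explicit formula for its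
increments. -/
theorem gBD_stein_and_increment (a b : ℕ → ℝ)
    (ha : ∀ x : ℕ, 0 < a x) (hb0 : b 0 = 0) (hb : ∀ x : ℕ, 1 ≤ x → 0 < b x)
    (hw : Summable (bdW a b)) :
    (∀ j i : ℕ,
      a i * gBD a b j (i + 1) - b i * gBD a b j i =
        (if i = j then 1 else 0) - bdPi a b j) ∧
    (∀ j i : ℕ, 1 ≤ i →
      gBD a b j (i + 1) - gBD a b j i =
        bdPi a b j *
          ((if i + 1 ≤ j then ePlus a b (i - 1) - ePlus a b i else 0) +
           (if i = j then eMinus a b (i + 1) + ePlus a b (i - 1) else 0) +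
           (if j ≤ i - 1 then eMinus a b (i + 1) - eMinus a b i else 0))) :=
  ⟨gBD_stein ha hb0 hb hw, gBD_succ_sub⟩
end

section
/- In the birth-death setting, assume α(x) − α(x+1) + β(x+1) − β(x) ≥ 0 for all x ∈ ℕ. Then the sequence (e_i^+)_{i ∈ ℕ} is non-decreasing, i.e. e_i^+ ≤ e_{i+1}^+ for all i ∈ ℕ, and the sequence (e_i^-)_{i ≥ 1} is non-increasing, i.e. e_{i+1}^- ≤ e_i^- for all i ≥ 1. -/
open scoped BigOperators

/-- If `V_1(x) = α(x) − α(x+1) + β(x+1) − β(x) ≥ 0` for all `x`, then `(e_i^+)` is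
non-decreasing and `(e_i^-)_{i≥1}` is non-increasing. -/
theorem ePlus_mono_eMinus_antitone (a b : ℕ → ℝ)
    (ha : ∀ x : ℕ, 0 < a x) (hb0 : b 0 = 0) (hb : ∀ x : ℕ, 1 ≤ x → 0 < b x)
    (hw : Summable (bdW a b))
    (hmono : ∀ x : ℕ, 0 ≤ a x - a (x + 1) + b (x + 1) - b x) :
    (∀ i : ℕ, ePlus a b i ≤ ePlus a b (i + 1)) ∧
    (∀ i : ℕ, 1 ≤ i → eMinus a b (i + 1) ≤ eMinus a b i) := by
  have hwpos : ∀ x, 0 < bdW a b x := fun x =>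
    Finset.prod_pos (fun y _ => div_pos (ha y) (hb (y + 1) (by omega)))
  have hS : 0 < ∑' y, bdW a b y := Summable.tsum_pos hw (fun x => (hwpos x).le) 0 (hwpos 0)
  have hπ : ∀ x, 0 < bdPi a b x := fun x => div_pos (hwpos x) hS
  have hdb : ∀ i, a i * bdPi a b i = b (i + 1) * bdPi a b (i + 1) := by
    intro i
    have hb' : b (i + 1) ≠ 0 := (hb (i + 1) (by omega)).ne'
    have hS' : (∑' y, bdW a b y) ≠ 0 := hS.ne'
    have hw1 : bdW a b (i + 1) = bdW a b i * (a i / b (i + 1)) := Finset.prod_range_succ _ _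
    unfold bdPi
    rw [hw1]
    field_simp
  have hab : ∀ k m : ℕ, k ≤ m → a m - b m ≤ a k - b k := by
    have : Antitone (fun x => a x - b x) := by
      apply antitone_nat_of_succ_le
      intro n
      have := hmono n
      linarith
    exact fun k m h => this h
  have hkey : ∀ i, ∑ k ∈ Finset.range (i + 1), (a k - b k) * bdPi a b k
      = b (i + 1) * bdPi a b (i + 1) := by
    intro i
    induction i with
    | zero =>
      rw [Finset.sum_range_one, hb0, sub_zero]
      exact hdb 0
    | succ n ih =>
      rw [Finset.sum_range_succ, ih]
      have := hdb (n + 1)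
      linarith
  have hplus : ∀ i, ePlus a b i ≤ ePlus a b (i + 1) := by
    intro i
    unfold ePlus
    rw [div_le_div_iff₀ (mul_pos (ha i) (hπ i)) (mul_pos (ha (i + 1)) (hπ (i + 1)))]
    rw [Finset.sum_range_succ (f := fun k => bdPi a b k) (n := i + 1)]
    set A := ∑ k ∈ Finset.range (i + 1), bdPi a b k with hA
    have hstep : (a (i + 1) - b (i + 1)) * A ≤ b (i + 1) * bdPi a b (i + 1) := by
      rw [← hkey i, hA, Finset.mul_sum]
      refine Finset.sum_le_sum (fun k hk => ?_)
      have hk' : k ≤ i + 1 := by have := Finset.mem_range.mp hk; omega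
      exact mul_le_mul_of_nonneg_right (hab k (i + 1) hk') (hπ k).le
    rw [hdb i]
    nlinarith [mul_le_mul_of_nonneg_right hstep (hπ (i + 1)).le, hπ (i + 1)]
  have hπsum : Summable (bdPi a b) := hw.div_const _
  have hTsum : ∀ i, Summable (fun k : ℕ => bdPi a b (i + k)) := by
    intro i
    have : Summable (fun k : ℕ => bdPi a b (k + i)) := (summable_nat_add_iff i).mpr hπsum
    simpa [add_comm] using this
  have hTsplit : ∀ i, (∑' k, bdPi a b (i + k)) = bdPi a b i + ∑' k, bdPi a b (i + 1 + k) := by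
    intro i
    rw [Summable.tsum_eq_zero_add (hTsum i)]
    simp only [add_zero]
    congr 1
    exact tsum_congr (fun k => by rw [show i + (k + 1) = i + 1 + k by omega])
  have htel : ∀ i N, ∑ k ∈ Finset.range N, (b (i + 1 + k) - a (i + 1 + k)) * bdPi a b (i + 1 + k)
      = a i * bdPi a b i - a (i + N) * bdPi a b (i + N) := by
    intro i N
    induction N with
    | zero => simp
    | succ n ih =>
      rw [Finset.sum_range_succ, ih]
      have h := hdb (i + n)
      have h1 : i + n + 1 = i + 1 + n := by omega
      rw [h1] at h
      have h2 : i + (n + 1) = i + 1 + n := by omega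
      rw [h2]
      linarith
  have htail : ∀ i, (b i - a i) * (∑' k, bdPi a b (i + 1 + k)) ≤ a i * bdPi a b i := by
    intro i
    have hHS : HasSum (fun k : ℕ => bdPi a b (i + 1 + k)) (∑' k, bdPi a b (i + 1 + k)) :=
      (hTsum (i + 1)).hasSum
    have htend2 : Filter.Tendsto
        (fun N => (b i - a i) * ∑ k ∈ Finset.range N, bdPi a b (i + 1 + k))
        Filter.atTop (nhds ((b i - a i) * ∑' k, bdPi a b (i + 1 + k))) :=
      hHS.tendsto_sum_nat.const_mul _
    refine le_of_tendsto htend2 (Filter.Eventually.of_forall (fun N => ?_))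
    calc (b i - a i) * ∑ k ∈ Finset.range N, bdPi a b (i + 1 + k)
        = ∑ k ∈ Finset.range N, (b i - a i) * bdPi a b (i + 1 + k) := Finset.mul_sum _ _ _
      _ ≤ ∑ k ∈ Finset.range N, (b (i + 1 + k) - a (i + 1 + k)) * bdPi a b (i + 1 + k) := by
          refine Finset.sum_le_sum (fun k _ => ?_)
          refine mul_le_mul_of_nonneg_right ?_ (hπ _).le
          have := hab i (i + 1 + k) (by omega)
          linarith
      _ = a i * bdPi a b i - a (i + N) * bdPi a b (i + N) := htel i N
      _ ≤ a i * bdPi a b i := by nlinarith [mul_pos (ha (i + N)) (hπ (i + N))]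
  have hminus : ∀ i, 1 ≤ i → eMinus a b (i + 1) ≤ eMinus a b i := by
    intro i hi
    unfold eMinus
    rw [div_le_div_iff₀ (mul_pos (hb (i + 1) (by omega)) (hπ (i + 1))) (mul_pos (hb i hi) (hπ i))]
    rw [hTsplit i, ← hdb i]
    have htl := htail i
    nlinarith [mul_le_mul_of_nonneg_right htl (hπ i).le, hπ i]
  exact ⟨hplus, hminus⟩
end

section
/- In the birth-death setting, for bounded f : ℕ → ℝ set g_f(i) = Σ_{j ∈ ℕ} f(j) g_j(i) (the series converges absolutely). Then: (a) for every i ∈ ℕ, sup{ |g_f(i+1)| : f : ℕ → [0,1] } = g_{1_{[0,i]}}(i+1), where 1_{[0,i]} is the indicator of {0,1,…,i}; (b) if moreover α(x) − α(x+1) + β(x+1) − β(x) ≥ 0 for all x ∈ ℕ, then for every i ≥ 1, sup{ |g_f(i+1) − g_f(i)| : f : ℕ → [0,1] } = g_{1_{{i}}}(i+1) − g_{1_{{i}}}(i), where 1_{{i}} is the indicator of the singleton {i}. -/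
open scoped BigOperators

open Finset

section SignedSum

variable {ι : Type*}

theorem summable_abs_mul_of_bounded {v : ι → ℝ} (hv : Summable v) {f : ι → ℝ} {C : ℝ}
    (hf : ∀ j, |f j| ≤ C) : Summable fun j => |f j * v j| :=
  Summable.of_nonneg_of_le (fun _ => abs_nonneg _)
    (fun j => by rw [abs_mul]; exact mul_le_mul_of_nonneg_right (hf j) (abs_nonneg _))
    (hv.abs.mul_left C)

theorem summable_mul_of_mem_unitInterval {v : ι → ℝ} (hv : Summable v) {f : ι → ℝ}
    (hf : ∀ j, 0 ≤ f j ∧ f j ≤ 1) : Summable fun j => f j * v j :=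
  (summable_abs_mul_of_bounded hv fun j => (abs_of_nonneg (hf j).1).trans_le (hf j).2).of_abs

theorem isGreatest_abs_tsum_mul_of_tsum_eq_zero {v : ι → ℝ} (hv : Summable v)
    (hv0 : ∑' j, v j = 0) (p : ι → Prop) [DecidablePred p]
    (hpos : ∀ j, p j → 0 ≤ v j) (hneg : ∀ j, ¬ p j → v j ≤ 0) :
    IsGreatest {M | ∃ f : ι → ℝ, (∀ j, 0 ≤ f j ∧ f j ≤ 1) ∧ M = |∑' j, f j * v j|}
      (∑' j, (if p j then 1 else 0) * v j) := by
  have hind : ∀ j, 0 ≤ (if p j then (1 : ℝ) else 0) ∧ (if p j then (1 : ℝ) else 0) ≤ 1 :=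
    fun j => by split_ifs <;> norm_num
  have hsind := summable_mul_of_mem_unitInterval hv hind
  have hT : 0 ≤ ∑' j, (if p j then (1 : ℝ) else 0) * v j :=
    tsum_nonneg fun j => by split_ifs with h <;> simp [hpos j, h]
  refine ⟨⟨_, hind, (abs_of_nonneg hT).symm⟩, ?_⟩
  rintro M ⟨f, hf, rfl⟩
  have hsf := summable_mul_of_mem_unitInterval hv hf
  have hle : ∀ j, f j * v j ≤ (if p j then 1 else 0) * v j := fun j => by
    by_cases h : p j
    · simp only [h, if_true, one_mul]; nlinarith [hpos j h, hf j]
    · simp only [h, if_false, zero_mul]; nlinarith [hneg j h, hf j]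
  have hge : ∀ j, v j - (if p j then 1 else 0) * v j ≤ f j * v j := fun j => by
    by_cases h : p j
    · simp only [h, if_true, one_mul, sub_self]; nlinarith [hpos j h, hf j]
    · simp only [h, if_false, zero_mul, sub_zero]; nlinarith [hneg j h, hf j]
  have hlower := (hv.sub hsind).tsum_le_tsum hge hsf
  rw [hv.tsum_sub hsind, hv0, zero_sub] at hlower
  exact abs_le.mpr ⟨hlower, hsf.tsum_le_tsum hle hsind⟩

end SignedSum

structure BirthDeathRates (a b : ℕ → ℝ) : Prop where
  birth_pos : ∀ x, 0 < a x
  death_pos : ∀ x, 1 ≤ x → 0 < b x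
  summable_bdW : Summable (bdW a b)

theorem gBD_succ (a b : ℕ → ℝ) (i j : ℕ) :
    gBD a b j (i + 1) = bdPi a b j * if j ≤ i then eMinus a b (i + 1) else -ePlus a b i := by
  simp only [gBD, Nat.succ_ne_zero, if_false, Nat.add_sub_cancel]
  rcases le_or_gt j i with h | h
  · rw [if_neg (by omega), if_pos (by omega), if_pos h, zero_add]
  · rw [if_pos (by omega), if_neg (by omega), if_neg (by omega), add_zero]

namespace BirthDeathRates

variable {a b : ℕ → ℝ}

theorem bdW_pos (h : BirthDeathRates a b) (x : ℕ) : 0 < bdW a b x :=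
  prod_pos fun y _ => div_pos (h.birth_pos y) (h.death_pos (y + 1) (Nat.le_add_left 1 y))

theorem tsum_bdW_pos (h : BirthDeathRates a b) : 0 < ∑' y, bdW a b y :=
  h.summable_bdW.tsum_pos (fun x => (h.bdW_pos x).le) 0 (h.bdW_pos 0)

theorem bdPi_pos (h : BirthDeathRates a b) (x : ℕ) : 0 < bdPi a b x :=
  div_pos (h.bdW_pos x) h.tsum_bdW_pos

theorem summable_bdPi (h : BirthDeathRates a b) : Summable (bdPi a b) :=
  h.summable_bdW.div_const _

theorem summable_bdPi_add (h : BirthDeathRates a b) (m : ℕ) :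
    Summable fun k => bdPi a b (m + k) := by
  simpa only [add_comm] using (summable_nat_add_iff m).mpr h.summable_bdPi

theorem birth_mul_bdPi (h : BirthDeathRates a b) (x : ℕ) :
    a x * bdPi a b x = b (x + 1) * bdPi a b (x + 1) := by
  have hb : b (x + 1) ≠ 0 := (h.death_pos (x + 1) (Nat.le_add_left 1 x)).ne'
  have hS : ∑' y, bdW a b y ≠ 0 := h.tsum_bdW_pos.ne'
  simp only [bdPi, bdW, prod_range_succ]
  field_simp

theorem ePlus_nonneg (h : BirthDeathRates a b) (i : ℕ) : 0 ≤ ePlus a b i :=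
  div_nonneg (sum_nonneg fun k _ => (h.bdPi_pos k).le)
    (mul_pos (h.birth_pos i) (h.bdPi_pos i)).le

theorem eMinus_nonneg (h : BirthDeathRates a b) {i : ℕ} (hi : 1 ≤ i) : 0 ≤ eMinus a b i :=
  div_nonneg (tsum_nonneg fun k => (h.bdPi_pos (i + k)).le)
    (mul_pos (h.death_pos i hi) (h.bdPi_pos i)).le

theorem summable_gBD (h : BirthDeathRates a b) (m : ℕ) : Summable fun j => gBD a b j m := by
  rcases m with _ | i
  · simp only [gBD, if_true]; exact summable_zero
  refine Summable.of_norm_bounded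
    (h.summable_bdPi.mul_right (|eMinus a b (i + 1)| + |ePlus a b i|)) fun j => ?_
  rw [gBD_succ, Real.norm_eq_abs, abs_mul, abs_of_pos (h.bdPi_pos j)]
  refine mul_le_mul_of_nonneg_left ?_ (h.bdPi_pos j).le
  split_ifs
  · linarith [abs_nonneg (ePlus a b i)]
  · rw [abs_neg]; linarith [abs_nonneg (eMinus a b (i + 1))]

/-- By detailed balance both the `j ≤ i` and the `j > i` part of the sum have absolute value
`(Σ_{k ≤ i} π(k)) (Σ_{k > i} π(k)) / (α(i) π(i))`. -/
theorem tsum_gBD (h : BirthDeathRates a b) (m : ℕ) : ∑' j, gBD a b j m = 0 := by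
  rcases m with _ | i
  · simp [gBD]
  rw [← (h.summable_gBD (i + 1)).sum_add_tsum_nat_add (i + 1)]
  have head : ∑ j ∈ range (i + 1), gBD a b j (i + 1)
      = (∑ j ∈ range (i + 1), bdPi a b j) * eMinus a b (i + 1) := by
    rw [sum_mul]
    exact sum_congr rfl fun j hj => by
      rw [gBD_succ, if_pos (Nat.lt_succ_iff.mp (mem_range.mp hj))]
  have tail : ∑' k, gBD a b (k + (i + 1)) (i + 1)
      = -((∑' k, bdPi a b (i + 1 + k)) * ePlus a b i) := by
    rw [← tsum_mul_right, ← tsum_neg]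
    exact tsum_congr fun k => by rw [gBD_succ, if_neg (by omega), add_comm k, mul_neg]
  have hflux : a i * bdPi a b i ≠ 0 := (mul_pos (h.birth_pos i) (h.bdPi_pos i)).ne'
  rw [head, tail, eMinus, ePlus, ← h.birth_mul_bdPi i]
  field_simp
  ring

theorem gBD_succ_nonneg (h : BirthDeathRates a b) {i j : ℕ} (hj : j ≤ i) :
    0 ≤ gBD a b j (i + 1) := by
  rw [gBD_succ, if_pos hj]
  exact mul_nonneg (h.bdPi_pos j).le (h.eMinus_nonneg (Nat.le_add_left 1 i))

theorem gBD_succ_nonpos (h : BirthDeathRates a b) {i j : ℕ} (hj : i < j) :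
    gBD a b j (i + 1) ≤ 0 := by
  rw [gBD_succ, if_neg (by omega)]
  exact mul_nonpos_of_nonneg_of_nonpos (h.bdPi_pos j).le (neg_nonpos.mpr (h.ePlus_nonneg i))

theorem sum_range_bdPi_mul_sub (h : BirthDeathRates a b) (hb0 : b 0 = 0) (i : ℕ) :
    ∑ k ∈ range (i + 1), bdPi a b k * (a k - b k) = a i * bdPi a b i := by
  induction i with
  | zero => simp [hb0, mul_comm]
  | succ n ih =>
    rw [sum_range_succ, ih]
    linear_combination h.birth_mul_bdPi n

theorem sum_range_bdPi_add_mul_sub (h : BirthDeathRates a b) (i N : ℕ) :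
    ∑ k ∈ range N, bdPi a b (i + 1 + k) * (b (i + 1 + k) - a (i + 1 + k))
      = a i * bdPi a b i - a (i + N) * bdPi a b (i + N) := by
  induction N with
  | zero => simp
  | succ n ih =>
    rw [sum_range_succ, ih, show i + 1 + n = i + n + 1 by omega, ← add_assoc]
    linear_combination -h.birth_mul_bdPi (i + n)

theorem ePlus_le_ePlus_succ (h : BirthDeathRates a b) (hb0 : b 0 = 0)
    (hmon : Antitone fun x => a x - b x) (i : ℕ) : ePlus a b i ≤ ePlus a b (i + 1) := by
  have hπ := h.bdPi_pos (i + 1)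
  have key : (∑ k ∈ range (i + 1), bdPi a b k) * (a (i + 1) - b (i + 1))
      ≤ b (i + 1) * bdPi a b (i + 1) := by
    rw [← h.birth_mul_bdPi i, ← h.sum_range_bdPi_mul_sub hb0 i, sum_mul]
    exact sum_le_sum fun k hk => mul_le_mul_of_nonneg_left
      (hmon (by have := mem_range.mp hk; omega)) (h.bdPi_pos k).le
  rw [ePlus, ePlus, div_le_div_iff₀ (mul_pos (h.birth_pos i) (h.bdPi_pos i))
    (mul_pos (h.birth_pos (i + 1)) hπ), h.birth_mul_bdPi i, sum_range_succ _ (i + 1)]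
  nlinarith [mul_le_mul_of_nonneg_right key hπ.le]

theorem eMinus_succ_le_eMinus (h : BirthDeathRates a b) (hmon : Antitone fun x => a x - b x)
    {i : ℕ} (hi : 1 ≤ i) : eMinus a b (i + 1) ≤ eMinus a b i := by
  have hπ := h.bdPi_pos i
  have key : (∑' k, bdPi a b (i + 1 + k)) * (b i - a i) ≤ a i * bdPi a b i := by
    rw [← tsum_mul_right]
    refine ((h.summable_bdPi_add (i + 1)).mul_right _).tsum_le_of_sum_range_le fun N => ?_
    calc ∑ k ∈ range N, bdPi a b (i + 1 + k) * (b i - a i)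
        ≤ ∑ k ∈ range N, bdPi a b (i + 1 + k) * (b (i + 1 + k) - a (i + 1 + k)) :=
          sum_le_sum fun k _ => mul_le_mul_of_nonneg_left
            (by linarith [hmon (show i ≤ i + 1 + k by omega)]) (h.bdPi_pos _).le
      _ = a i * bdPi a b i - a (i + N) * bdPi a b (i + N) := h.sum_range_bdPi_add_mul_sub i N
      _ ≤ a i * bdPi a b i := by
          linarith [mul_pos (h.birth_pos (i + N)) (h.bdPi_pos (i + N))]
  have hsplit : ∑' k, bdPi a b (i + k) = bdPi a b i + ∑' k, bdPi a b (i + 1 + k) := by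
    rw [(h.summable_bdPi_add i).tsum_eq_zero_add]
    simp only [add_zero, add_assoc, add_comm 1]
  rw [eMinus, eMinus, div_le_div_iff₀ (mul_pos (h.death_pos (i + 1) (by omega)) (h.bdPi_pos _))
    (mul_pos (h.death_pos i hi) hπ), ← h.birth_mul_bdPi i, hsplit]
  nlinarith [mul_le_mul_of_nonneg_right key hπ.le]

theorem gBD_succ_sub_gBD_self_nonneg (h : BirthDeathRates a b) (i : ℕ) :
    0 ≤ gBD a b (i + 1) (i + 1 + 1) - gBD a b (i + 1) (i + 1) := by
  rw [gBD_succ, gBD_succ, if_pos le_rfl, if_neg (by omega), ← mul_sub]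
  exact mul_nonneg (h.bdPi_pos _).le
    (by linarith [h.eMinus_nonneg (Nat.le_add_left 1 (i + 1)), h.ePlus_nonneg i])

theorem gBD_succ_sub_gBD_nonpos (h : BirthDeathRates a b) (hb0 : b 0 = 0)
    (hmon : Antitone fun x => a x - b x) {i j : ℕ} (hj : j ≠ i + 1) :
    gBD a b j (i + 1 + 1) - gBD a b j (i + 1) ≤ 0 := by
  rw [gBD_succ, gBD_succ, ← mul_sub]
  refine mul_nonpos_of_nonneg_of_nonpos (h.bdPi_pos j).le ?_
  rcases le_or_gt j i with hji | hij
  · rw [if_pos (by omega), if_pos hji]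
    linarith [h.eMinus_succ_le_eMinus hmon (Nat.le_add_left 1 i)]
  · rw [if_neg (by omega), if_neg (by omega)]
    linarith [h.ePlus_le_ePlus_succ hb0 hmon i]

end BirthDeathRates

/-- Argmax of the pointwise Stein factors for bounded functions, where
`g_f(i) = Σ_j f(j) g_j(i)`: the series converges absolutely for bounded `f`;
(a) `sup{|g_f(i+1)| : 0 ≤ f ≤ 1} = g_{1_{[0,i]}}(i+1)`;
(b) under the monotonicity condition,
`sup{|g_f(i+1) − g_f(i)| : 0 ≤ f ≤ 1} = g_{1_{{i}}}(i+1) − g_{1_{{i}}}(i)` for `i ≥ 1`. -/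
theorem argmax_pointwise_stein_factor_bounded (a b : ℕ → ℝ)
    (ha : ∀ x : ℕ, 0 < a x) (hb0 : b 0 = 0) (hb : ∀ x : ℕ, 1 ≤ x → 0 < b x)
    (hw : Summable (bdW a b)) :
    (∀ (f : ℕ → ℝ), (∃ C : ℝ, ∀ j : ℕ, |f j| ≤ C) →
      ∀ i : ℕ, Summable fun j : ℕ => |f j * gBD a b j i|) ∧
    (∀ i : ℕ,
      IsGreatest
        {M : ℝ | ∃ f : ℕ → ℝ, (∀ j : ℕ, 0 ≤ f j ∧ f j ≤ 1) ∧
          M = |∑' j : ℕ, f j * gBD a b j (i + 1)|}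
        (∑' j : ℕ, (if j ≤ i then (1 : ℝ) else 0) * gBD a b j (i + 1))) ∧
    ((∀ x : ℕ, 0 ≤ a x - a (x + 1) + b (x + 1) - b x) →
      ∀ i : ℕ, 1 ≤ i →
        IsGreatest
          {M : ℝ | ∃ f : ℕ → ℝ, (∀ j : ℕ, 0 ≤ f j ∧ f j ≤ 1) ∧
            M = |(∑' j : ℕ, f j * gBD a b j (i + 1)) - ∑' j : ℕ, f j * gBD a b j i|}
          (gBD a b i (i + 1) - gBD a b i i)) := by
  have h : BirthDeathRates a b := ⟨ha, hb, hw⟩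
  refine ⟨fun f ⟨C, hC⟩ i => summable_abs_mul_of_bounded (h.summable_gBD i) hC,
    fun i => isGreatest_abs_tsum_mul_of_tsum_eq_zero (h.summable_gBD _) (h.tsum_gBD _)
      (· ≤ i) (fun _ => h.gBD_succ_nonneg) (fun _ hj => h.gBD_succ_nonpos (not_le.mp hj)),
    fun hmon i hi => ?_⟩
  have hanti : Antitone fun x => a x - b x :=
    antitone_nat_of_succ_le fun x => by linarith [hmon x]
  obtain ⟨n, rfl⟩ : ∃ n, i = n + 1 := ⟨i - 1, by omega⟩
  have hdiff := (h.summable_gBD (n + 1 + 1)).sub (h.summable_gBD (n + 1))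
  have key := isGreatest_abs_tsum_mul_of_tsum_eq_zero hdiff
    (by rw [(h.summable_gBD _).tsum_sub (h.summable_gBD _), h.tsum_gBD, h.tsum_gBD, sub_zero])
    (· = n + 1) (fun _ hj => hj ▸ h.gBD_succ_sub_gBD_self_nonneg n)
    (fun _ hj => h.gBD_succ_sub_gBD_nonpos hb0 hanti hj)
  simp only [ite_mul, one_mul, zero_mul, tsum_ite_eq] at key
  convert key using 1
  refine Set.ext fun M => exists_congr fun f => and_congr_right fun hf => ?_
  rw [← (summable_mul_of_mem_unitInterval (h.summable_gBD _) hf).tsum_sub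
    (summable_mul_of_mem_unitInterval (h.summable_gBD _) hf)]
  simp only [mul_sub]
end

section
/- In the birth-death setting, assume α(x) − α(x+1) + β(x+1) − β(x) ≥ 0 for all x ∈ ℕ. For m ∈ ℕ set g_{1_{[0,m]}}(i) = Σ_{j=0}^m g_j(i), and write ∂h(i) = h(i+1) − h(i). Then for every i ≥ 1, sup_{m ∈ ℕ} |∂g_{1_{[0,m]}}(i)| = max{ −∂g_{1_{[0,i−1]}}(i), ∂g_{1_{[0,i]}}(i) }. -/
open scoped BigOperators

/-- Argmax of the pointwise Stein factor for half-line indicator functions: under the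
monotonicity condition, writing `G(m) = g_{1_{[0,m]}}` and `∂h(i) = h(i+1) − h(i)`,
for every `i ≥ 1`,
`sup_m |∂G(m)(i)| = max(−∂G(i−1)(i), ∂G(i)(i))`. -/
theorem argmax_pointwise_stein_factor_indicator (a b : ℕ → ℝ)
    (ha : ∀ x : ℕ, 0 < a x) (hb0 : b 0 = 0) (hb : ∀ x : ℕ, 1 ≤ x → 0 < b x)
    (hw : Summable (bdW a b))
    (hmono : ∀ x : ℕ, 0 ≤ a x - a (x + 1) + b (x + 1) - b x)
    (G : ℕ → ℕ → ℝ)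
    (hG : ∀ m i : ℕ, G m i = ∑ j ∈ Finset.range (m + 1), gBD a b j i)
    (i : ℕ) (hi : 1 ≤ i) :
    IsGreatest {M : ℝ | ∃ m : ℕ, M = |G m (i + 1) - G m i|}
      (max (-(G (i - 1) (i + 1) - G (i - 1) i)) (G i (i + 1) - G i i)) := by
  obtain ⟨n, rfl⟩ : ∃ n, i = n + 1 := ⟨i - 1, (Nat.succ_pred_eq_of_pos hi).symm⟩
  simp only [Nat.add_sub_cancel]
  set p : ℕ → ℝ := bdPi a b with hp_def
  -- positivity and summability of π
  have hwpos : ∀ x, 0 < bdW a b x := fun x =>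
    Finset.prod_pos fun y _ => div_pos (ha y) (hb (y + 1) (Nat.le_add_left 1 y))
  have hWpos : 0 < ∑' y, bdW a b y := Summable.tsum_pos hw (fun x => (hwpos x).le) 0 (hwpos 0)
  have hppos : ∀ x, 0 < p x := fun x => div_pos (hwpos x) hWpos
  have hpsum : Summable p := hw.div_const _
  -- detailed balance
  have hbal : ∀ k, b (k + 1) * p (k + 1) = a k * p k := by
    intro k
    have hbk : b (k + 1) ≠ 0 := (hb (k + 1) (Nat.le_add_left 1 k)).ne'
    have hWne : (∑' y, bdW a b y) ≠ 0 := hWpos.ne'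
    have hws : bdW a b (k + 1) = bdW a b k * (a k / b (k + 1)) := Finset.prod_range_succ _ _
    simp only [hp_def, bdPi, hws]
    field_simp
  -- partial sums and tails
  set S : ℕ → ℝ := fun m => ∑ k ∈ Finset.range (m + 1), p k with hS_def
  set T : ℕ → ℝ := fun j => ∑' k : ℕ, p (j + k) with hT_def
  have hTsum : ∀ j, Summable (fun k => p (j + k)) := fun j =>
    hpsum.comp_injective (add_right_injective j)
  have hTsucc : ∀ j, T j = p j + T (j + 1) := by
    intro j
    rw [hT_def]
    simp only
    rw [Summable.tsum_eq_zero_add (hTsum j)]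
    simp only [Nat.add_zero]
    congr 1
    apply tsum_congr
    intro k
    congr 1
    omega
  have hTnonneg : ∀ j, 0 ≤ T j := fun j => tsum_nonneg fun k => (hppos _).le
  have hTanti : ∀ j m, j ≤ m → T m ≤ T j := by
    have : ∀ j, T (j + 1) ≤ T j := fun j => by
      rw [hTsucc j]; linarith [hppos j]
    intro j m hjm
    exact (antitone_nat_of_succ_le this) hjm
  have hSpos : ∀ m, 0 < S m := fun m =>
    Finset.sum_pos (fun k _ => hppos k) (by simp)
  have hSmono : ∀ m m', m ≤ m' → S m ≤ S m' := by
    intro m m' h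
    apply Finset.sum_le_sum_of_subset_of_nonneg
    · exact Finset.range_subset_range.2 (by omega)
    · intro k _ _; exact (hppos k).le
  have hSsucc : ∀ m, S (m + 1) = S m + p (m + 1) := fun m => Finset.sum_range_succ _ _
  -- antitonicity of a - b
  have hanti : ∀ k l, k ≤ l → a l - b l ≤ a k - b k := by
    have h : Antitone (fun x => a x - b x) := by
      apply antitone_nat_of_succ_le
      intro x
      have := hmono x
      show a (x + 1) - b (x + 1) ≤ a x - b x
      linarith
    exact fun k l hkl => h hkl
  -- telescoping identity: Σ_{k≤m} (a k - b k) π k = b(m+1) π(m+1)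
  have key1 : ∀ m, ∑ k ∈ Finset.range (m + 1), (a k - b k) * p k = b (m + 1) * p (m + 1) := by
    intro m
    induction m with
    | zero =>
      rw [zero_add, Finset.sum_range_one, hb0]
      have := hbal 0
      linarith
    | succ m ih =>
      rw [Finset.sum_range_succ, ih]
      have h1 := hbal (m + 1)
      have h2 := hbal (m + 2)
      linarith
  -- (*) : (a(m+1) - b(m+1)) S m ≤ b(m+1) π(m+1)
  have star : ∀ m, (a (m + 1) - b (m + 1)) * S m ≤ b (m + 1) * p (m + 1) := by
    intro m
    rw [← key1 m, hS_def]
    simp only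
    rw [Finset.mul_sum]
    apply Finset.sum_le_sum
    intro k hk
    have hk' : k ≤ m + 1 := by
      have := Finset.mem_range.1 hk; omega
    exact mul_le_mul_of_nonneg_right (hanti k (m + 1) hk') (hppos k).le
  -- (**) : (b(m+1) - a(m+1)) T (m+2) ≤ a(m+1) π(m+1)
  have htel : ∀ j N, ∑ k ∈ Finset.range N, (b (j + 1 + k) - a (j + 1 + k)) * p (j + 1 + k)
      = a j * p j - a (j + N) * p (j + N) := by
    intro j N
    induction N with
    | zero => simp
    | succ N ih =>
      rw [Finset.sum_range_succ, ih]
      have h1 := hbal (j + N)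
      have e1 : j + 1 + N = j + N + 1 := by omega
      have e2 : j + (N + 1) = j + N + 1 := by omega
      rw [e1, e2]
      linarith
  have starstar : ∀ m, (b (m + 1) - a (m + 1)) * T (m + 2) ≤ a (m + 1) * p (m + 1) := by
    intro m
    have hpartial : ∀ N, (b (m + 1) - a (m + 1)) * ∑ k ∈ Finset.range N, p (m + 2 + k)
        ≤ a (m + 1) * p (m + 1) := by
      intro N
      have h1 : (b (m + 1) - a (m + 1)) * ∑ k ∈ Finset.range N, p (m + 2 + k)
          = ∑ k ∈ Finset.range N, (b (m + 1) - a (m + 1)) * p (m + 2 + k) :=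
        Finset.mul_sum _ _ _
      have h2 : ∑ k ∈ Finset.range N, (b (m + 1) - a (m + 1)) * p (m + 2 + k)
          ≤ ∑ k ∈ Finset.range N, (b (m + 2 + k) - a (m + 2 + k)) * p (m + 2 + k) := by
        apply Finset.sum_le_sum
        intro k _
        have := hanti (m + 1) (m + 2 + k) (by omega)
        exact mul_le_mul_of_nonneg_right (by linarith) (hppos _).le
      have h3 : ∑ k ∈ Finset.range N, (b (m + 2 + k) - a (m + 2 + k)) * p (m + 2 + k)
          = a (m + 1) * p (m + 1) - a (m + 1 + N) * p (m + 1 + N) := by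
        have := htel (m + 1) N
        simpa [show ∀ k, m + 1 + 1 + k = m + 2 + k from fun k => by omega] using this
      have h4 : 0 < a (m + 1 + N) * p (m + 1 + N) := mul_pos (ha _) (hppos _)
      linarith
    have hlim : Filter.Tendsto
        (fun N => (b (m + 1) - a (m + 1)) * ∑ k ∈ Finset.range N, p (m + 2 + k))
        Filter.atTop (nhds ((b (m + 1) - a (m + 1)) * T (m + 2))) :=
      ((hTsum (m + 2)).hasSum.tendsto_sum_nat).const_mul _
    exact le_of_tendsto hlim (Filter.Eventually.of_forall hpartial)
  -- expressions for e's
  have hePlus : ∀ k, ePlus a b k = S k / (a k * p k) := fun k => rfl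
  have heM1 : ∀ k, eMinus a b (k + 1) = (p (k + 1) + T (k + 2)) / (a k * p k) := by
    intro k
    have h0 : eMinus a b (k + 1) = T (k + 1) / (b (k + 1) * p (k + 1)) := rfl
    rw [h0, hbal k, hTsucc (k + 1)]
  have heM2 : ∀ k, eMinus a b (k + 2) = T (k + 2) / (a (k + 1) * p (k + 1)) := by
    intro k
    have h0 : eMinus a b (k + 2) = T (k + 2) / (b (k + 2) * p (k + 2)) := rfl
    rw [h0, hbal (k + 1)]
  have hApos : ∀ k, 0 < a k * p k := fun k => mul_pos (ha k) (hppos k)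
  -- monotonicity of e's at n
  have hcA : 0 ≤ eMinus a b (n + 1) - eMinus a b (n + 2) := by
    rw [heM1 n, heM2 n, ← hbal n]
    rw [sub_nonneg, div_le_div_iff₀ (hApos (n + 1)) (mul_pos (hb (n + 1) (by omega)) (hppos (n + 1)))]
    have h1 := starstar n
    nlinarith [hppos (n + 1), hTnonneg (n + 2), ha (n + 1), hb (n + 1) (Nat.le_add_left 1 n)]
  have hcB : 0 ≤ ePlus a b (n + 1) - ePlus a b n := by
    rw [hePlus n, hePlus (n + 1), hSsucc n, ← hbal n]
    rw [sub_nonneg, div_le_div_iff₀ (mul_pos (hb (n + 1) (by omega)) (hppos (n + 1))) (hApos (n + 1))]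
    have h1 := star n
    nlinarith [hppos (n + 1), hSpos n, ha (n + 1), hb (n + 1) (Nat.le_add_left 1 n)]
  -- the difference of g's
  have gdiff_low : ∀ j, j ≤ n → gBD a b j (n + 1 + 1) - gBD a b j (n + 1)
      = p j * (eMinus a b (n + 2) - eMinus a b (n + 1)) := by
    intro j hj
    simp only [gBD, if_neg (by omega : ¬ n + 1 + 1 = 0), if_neg (by omega : ¬ n + 1 + 1 ≤ j),
      if_pos (by omega : j + 1 ≤ n + 1 + 1), if_neg (by omega : ¬ n + 1 = 0),
      if_neg (by omega : ¬ n + 1 ≤ j), if_pos (by omega : j + 1 ≤ n + 1),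
      show n + 1 + 1 = n + 2 from rfl]
    ring
  have gdiff_mid : gBD a b (n + 1) (n + 1 + 1) - gBD a b (n + 1) (n + 1)
      = p (n + 1) * (eMinus a b (n + 2) + ePlus a b n) := by
    simp only [gBD, if_neg (by omega : ¬ n + 1 + 1 = 0), if_neg (by omega : ¬ n + 1 + 1 ≤ n + 1),
      if_pos (by omega : n + 1 + 1 ≤ n + 1 + 1), if_neg (by omega : ¬ n + 1 = 0),
      if_pos (le_refl (n + 1)), if_neg (by omega : ¬ n + 1 + 1 ≤ n + 1),
      show n + 1 + 1 = n + 2 from rfl, Nat.add_sub_cancel]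
    ring
  have gdiff_high : ∀ j, n + 2 ≤ j → gBD a b j (n + 1 + 1) - gBD a b j (n + 1)
      = p j * (ePlus a b n - ePlus a b (n + 1)) := by
    intro j hj
    simp only [gBD, if_neg (by omega : ¬ n + 1 + 1 = 0), if_pos (by omega : n + 1 + 1 ≤ j),
      if_neg (by omega : ¬ j + 1 ≤ n + 1 + 1), if_neg (by omega : ¬ n + 1 = 0),
      if_pos (by omega : n + 1 ≤ j), if_neg (by omega : ¬ j + 1 ≤ n + 1),
      show n + 1 + 1 - 1 = n + 1 from rfl, Nat.add_sub_cancel]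
    ring
  -- difference of G's as a sum
  have hGdiff : ∀ m, G m (n + 1 + 1) - G m (n + 1)
      = ∑ j ∈ Finset.range (m + 1), (gBD a b j (n + 1 + 1) - gBD a b j (n + 1)) := by
    intro m
    rw [hG, hG, ← Finset.sum_sub_distrib]
  have hDlow : ∀ m, m ≤ n → G m (n + 1 + 1) - G m (n + 1)
      = (eMinus a b (n + 2) - eMinus a b (n + 1)) * S m := by
    intro m hm
    rw [hGdiff m]
    have : ∀ j ∈ Finset.range (m + 1), gBD a b j (n + 1 + 1) - gBD a b j (n + 1)
        = p j * (eMinus a b (n + 2) - eMinus a b (n + 1)) := by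
      intro j hj
      exact gdiff_low j (by have := Finset.mem_range.1 hj; omega)
    rw [Finset.sum_congr rfl this, ← Finset.sum_mul, hS_def]
    simp only
    ring
  have hDmid : G (n + 1) (n + 1 + 1) - G (n + 1) (n + 1)
      = (eMinus a b (n + 2) - eMinus a b (n + 1)) * S n
        + p (n + 1) * (eMinus a b (n + 2) + ePlus a b n) := by
    rw [hGdiff (n + 1), Finset.sum_range_succ, ← hGdiff n, hDlow n le_rfl, gdiff_mid]
  have hDstep : ∀ m, n + 1 ≤ m → G (m + 1) (n + 1 + 1) - G (m + 1) (n + 1)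
      = (G m (n + 1 + 1) - G m (n + 1)) + p (m + 1) * (ePlus a b n - ePlus a b (n + 1)) := by
    intro m hm
    rw [hGdiff (m + 1), Finset.sum_range_succ, ← hGdiff m, gdiff_high (m + 1) (by omega)]
  -- closed form at i and beyond
  have hDid : G (n + 1) (n + 1 + 1) - G (n + 1) (n + 1)
      = (ePlus a b (n + 1) - ePlus a b n) * T (n + 2) := by
    rw [hDmid, heM1 n, heM2 n, hePlus n, hePlus (n + 1), hSsucc n]
    have h1 : (a n * p n) ≠ 0 := (hApos n).ne'
    have h2 : (a (n + 1) * p (n + 1)) ≠ 0 := (hApos (n + 1)).ne'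
    field_simp
    ring
  have hDhigh : ∀ m, n + 1 ≤ m → G m (n + 1 + 1) - G m (n + 1)
      = (ePlus a b (n + 1) - ePlus a b n) * T (m + 1) := by
    intro m hm
    induction m, hm using Nat.le_induction with
    | base => exact hDid
    | succ m hm ih =>
      rw [hDstep m hm, ih, hTsucc (m + 1)]
      ring
  -- bounds
  have hlow_le : ∀ m, m ≤ n → G n (n + 1 + 1) - G n (n + 1) ≤ G m (n + 1 + 1) - G m (n + 1)
      ∧ G m (n + 1 + 1) - G m (n + 1) ≤ 0 := by
    intro m hm
    rw [hDlow m hm, hDlow n le_rfl]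
    constructor
    · nlinarith [hSmono m n hm, hSpos m, hSpos n, hcA]
    · nlinarith [hSpos m, hcA]
  have hhigh_le : ∀ m, n + 1 ≤ m → 0 ≤ G m (n + 1 + 1) - G m (n + 1)
      ∧ G m (n + 1 + 1) - G m (n + 1) ≤ G (n + 1) (n + 1 + 1) - G (n + 1) (n + 1) := by
    intro m hm
    rw [hDhigh m hm, hDhigh (n + 1) le_rfl]
    constructor
    · nlinarith [hTnonneg (m + 1), hcB]
    · nlinarith [hTanti (n + 2) (m + 1) (by omega), hTnonneg (m + 1), hcB]
  constructor
  · -- membership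
    rcases le_total (-(G n (n + 1 + 1) - G n (n + 1)))
        (G (n + 1) (n + 1 + 1) - G (n + 1) (n + 1)) with h | h
    · refine ⟨n + 1, ?_⟩
      rw [max_eq_right h, abs_of_nonneg (hhigh_le (n + 1) le_rfl).1]
    · refine ⟨n, ?_⟩
      rw [max_eq_left h, abs_of_nonpos (hlow_le n le_rfl).2]
  · -- upper bound
    rintro M ⟨m, rfl⟩
    rcases le_or_gt m n with hm | hm
    · rw [abs_of_nonpos (hlow_le m hm).2]
      exact le_max_of_le_left (by linarith [(hlow_le m hm).1])
    · rw [abs_of_nonneg (hhigh_le m hm).1]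
      exact le_max_of_le_right (hhigh_le m hm).2
end
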